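/- arXiv:1208.0312 — 10 statements merged into one kernel-verified Lean document; each statement's English description precedes it below -/
import Mathlib

section
/- Let B = 2. Consider an instance of jobs with positive integer lengths and arbitrary feasible slot sets in which at least one fractional (preemptive) schedule exists. Then there exists a fractional schedule attaining the minimum fractional active time in which every value x_{j,s} and every value a_s lies in the set {0, 1/2, 1}. -/
/-!
Among the optimal fractional schedules, which form a nonempty compact set, pick an extreme
point `(x, a)`. No nonzero perturbation keeps all constraints that are tight at `(x, a)` tight.
Call `x j s` free if `0 < x j s < a s`, and `a s` free if `0 < a s < 1`. Every other value is
`0`, `1`, or equal to a free `a s` (then `x j s` is tied to slot `s`). The tight constraints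
then become an integer system in the free values with a unique solution. In this system, the
row of job `j` has coefficient `1` on each free `x j s` and on each `a s` to which it is tied.
The row of a saturated slot `s` has coefficient `1` on each free `x j s` and `k - 2` on `a s`,
where `k ≤ 2` jobs are tied to `s`. So the coefficients of each variable have absolute values
summing to at most `2`. Eliminating a variable with a coefficient `±1` preserves this bound;
when there is none, uniqueness forces every variable to be alone in its row, with coefficient
`±2`. Hence twice the unique solution is integral.
-/

open Finset

/-- A fractional (preemptive) schedule. -/
def IsFracSchedule {J S : Type*} [Fintype J] [Fintype S]
    (B : ℕ) (T : J → Finset S) (len : J → ℕ) (x : J → S → ℝ) (a : S → ℝ) : Prop :=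
  (∀ j s, 0 ≤ x j s) ∧ (∀ s, 0 ≤ a s ∧ a s ≤ 1) ∧
    (∀ j s, s ∉ T j → x j s = 0) ∧
    (∀ j, ∑ s, x j s = (len j : ℝ)) ∧
    (∀ j s, x j s ≤ a s) ∧
    (∀ s, ∑ j, x j s ≤ (B : ℝ) * a s)

open Filter Topology Matrix

namespace Matrix

variable {ι V : Type*}

lemma map_intCast_mulVec_single [Fintype V] [DecidableEq V] (M : Matrix ι V ℤ) (v : V) (t : ℝ)
    (i : ι) : (M.map (↑) *ᵥ Pi.single v t) i = M i v * t := by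
  simp [mulVec_single]

/-- Eliminates column `u` using row `ρ`, which is then dropped. -/
def pivot [DecidableEq ι] (M : Matrix ι V ℤ) (ρ : ι) (u : V) : Matrix ι V ℤ :=
  of fun i v => if i = ρ then 0 else M i v - M i u * M ρ u * M ρ v

section Pivot

variable [DecidableEq ι] (M : Matrix ι V ℤ) {ρ : ι} {u : V}

lemma pivot_apply (ρ : ι) (u : V) (i : ι) (v : V) :
    M.pivot ρ u i v = if i = ρ then 0 else M i v - M i u * M ρ u * M ρ v :=
  rfl

lemma pivot_apply_col (h : |M ρ u| = 1) (i : ι) : M.pivot ρ u i u = 0 := by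
  have h2 : M ρ u * M ρ u = 1 := by rw [← abs_mul_abs_self, h, one_mul]
  rw [pivot_apply]
  split_ifs
  · rfl
  · linear_combination (-M i u) * h2

lemma pivot_map_mulVec [Fintype V] (g : V → ℝ) (i : ι) :
    ((M.pivot ρ u).map (↑) *ᵥ g) i =
      if i = ρ then 0 else (M.map (↑) *ᵥ g) i - M i u * M ρ u * (M.map (↑) *ᵥ g) ρ := by
  simp only [mulVec, dotProduct, map_apply, pivot_apply]
  split_ifs
  · simp
  · rw [mul_sum, ← sum_sub_distrib]
    refine sum_congr rfl fun v _ => ?_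
    push_cast
    ring

lemma sum_abs_pivot_le [Fintype ι] (h : |M ρ u| = 1) (hu : ∑ i, |M i u| ≤ 2) (v : V) :
    ∑ i, |M.pivot ρ u i v| ≤ ∑ i, |M i v| := by
  have key : ∀ i, |M.pivot ρ u i v| + (if i = ρ then 2 * |M ρ v| else 0) ≤
      |M i v| + |M i u| * |M ρ v| := by
    intro i
    rw [pivot_apply]
    split_ifs with hi
    · subst hi
      rw [h, abs_zero]
      linarith
    · rw [add_zero]
      calc |M i v - M i u * M ρ u * M ρ v| ≤ |M i v| + |M i u * M ρ u * M ρ v| := abs_sub _ _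
        _ = |M i v| + |M i u| * |M ρ v| := by rw [abs_mul, abs_mul, h, mul_one]
  have := Finset.sum_le_sum (s := univ) fun i _ => key i
  rw [sum_add_distrib, sum_ite_eq' univ ρ, if_pos (mem_univ _), sum_add_distrib, ← sum_mul] at this
  have := mul_le_mul_of_nonneg_right hu (abs_nonneg (M ρ v))
  linarith

end Pivot

section Rigid

variable [Fintype ι] [Fintype V] {M : Matrix ι V ℤ} {A : Finset V}

def IsRigidOn (M : Matrix ι V ℤ) (A : Finset V) : Prop :=
  ∀ d : V → ℝ, (∀ v ∉ A, d v = 0) → M.map (↑) *ᵥ d = 0 → ∀ v ∈ A, d v = 0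

lemma IsRigidOn.exists_ne_zero (h : M.IsRigidOn A) {v : V} (hv : v ∈ A) : ∃ i, M i v ≠ 0 := by
  classical
  by_contra! hcol
  have := h (Pi.single v 1) (fun w hw => Pi.single_eq_of_ne (ne_of_mem_of_not_mem hv hw).symm 1)
    (funext fun i => by simp [map_intCast_mulVec_single, hcol]) v hv
  simp at this

lemma IsRigidOn.exists_abs_eq_two (h : M.IsRigidOn A) {v : V} (hv : v ∈ A)
    (hcol : ∑ i, |M i v| ≤ 2) (hunit : ∀ i, |M i v| ≠ 1) :
    ∃ ρ, |M ρ v| = 2 ∧ ∀ i ≠ ρ, M i v = 0 := by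
  classical
  obtain ⟨ρ, hρ⟩ := h.exists_ne_zero hv
  have hsplit := Fintype.sum_eq_add_sum_compl ρ fun i => |M i v|
  have hρ2 : |M ρ v| = 2 := by
    have := abs_pos.2 hρ
    have := hunit ρ
    have : 0 ≤ ∑ i ∈ {ρ}ᶜ, |M i v| := sum_nonneg fun i _ => abs_nonneg _
    omega
  refine ⟨ρ, hρ2, fun i hi => abs_eq_zero.1 (le_antisymm ?_ (abs_nonneg _))⟩
  have := single_le_sum (fun i _ => abs_nonneg (M i v)) (mem_compl.2 (notMem_singleton.2 hi))
  omega

omit [Fintype ι] in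
lemma IsRigidOn.pivot [DecidableEq ι] [DecidableEq V] (h : M.IsRigidOn A) {ρ : ι} {u : V}
    (hu : u ∈ A) (hρu : |M ρ u| = 1) : (M.pivot ρ u).IsRigidOn (A.erase u) := by
  intro d' hd' hker v hv
  have hsq : (M ρ u : ℝ) * M ρ u = 1 := by
    exact_mod_cast (abs_mul_abs_self (M ρ u)).symm.trans (by rw [hρu, one_mul])
  generalize hr : (M.map (↑) *ᵥ d') ρ = r
  -- correct `d'` at `u` so that the pivot row vanishes as well
  have hd := h (d' + Pi.single u (-(M ρ u) * r))
    (fun w hw => by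
      have hwu : w ≠ u := (ne_of_mem_of_not_mem hu hw).symm
      simp [hwu, hd' w (fun h => hw (mem_of_mem_erase h))])
    (funext fun i => by
      have := congrFun hker i
      simp only [Pi.zero_apply] at this
      rw [pivot_map_mulVec, hr] at this
      rw [mulVec_add, Pi.add_apply, map_intCast_mulVec_single, Pi.zero_apply]
      split_ifs at this with hi
      · subst hi; linear_combination hr - r * hsq
      · linear_combination this)
    v (mem_of_mem_erase hv)
  simpa [ne_of_mem_erase hv] using hd

variable {y : V → ℝ}

lemma IsRigidOn.exists_two_mul_eq_int_of_forall_abs_ne_one (h : M.IsRigidOn A)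
    (hsupp : ∀ i, ∀ v ∉ A, M i v = 0) (hcol : ∀ v ∈ A, ∑ i, |M i v| ≤ 2)
    (hunit : ∀ v ∈ A, ∀ i, |M i v| ≠ 1)
    (hy : ∀ i, ∃ k : ℤ, (M.map (↑) *ᵥ y) i = k) : ∀ v ∈ A, ∃ k : ℤ, 2 * y v = k := by
  classical
  intro v hv
  obtain ⟨ρ, hρv, hρ⟩ := h.exists_abs_eq_two hv (hcol v hv) (hunit v hv)
  -- a second variable `w` of row `ρ` would also occur only in row `ρ`, so that the
  -- 2 × 1 system restricted to `v, w` would have a kernel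
  have hrow : ∀ w ≠ v, M ρ w = 0 := by
    intro w hwv
    by_contra hw
    have hwA : w ∈ A := by_contra fun hwA => hw (hsupp ρ w hwA)
    obtain ⟨σ, -, hσ⟩ := h.exists_abs_eq_two hwA (hcol w hwA) (hunit w hwA)
    obtain rfl : σ = ρ := by_contra fun hσρ => hw (hσ ρ (Ne.symm hσρ))
    have := h (Pi.single v (M σ w : ℝ) - Pi.single w (M σ v : ℝ))
      (fun t ht => by
        simp [ne_of_mem_of_not_mem hv ht |>.symm,
          ne_of_mem_of_not_mem hwA ht |>.symm])
      (funext fun i => by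
        rw [mulVec_sub, Pi.sub_apply, map_intCast_mulVec_single, map_intCast_mulVec_single]
        by_cases hi : i = σ
        · subst hi; simp [mul_comm]
        · simp [hρ i hi, hσ i hi])
      v hv
    simp [hwv.symm, hw] at this
  obtain ⟨k, hk⟩ := hy ρ
  have hk' : (M ρ v : ℝ) * y v = k := by
    rw [← hk, mulVec, dotProduct, sum_eq_single v (fun w _ hwv => by simp [hrow w hwv]) (by simp)]
    simp
  rcases (abs_eq zero_le_two).1 hρv with h2 | h2
  · exact ⟨k, by rw [← hk', h2]; push_cast; ring⟩
  · exact ⟨-k, by rw [Int.cast_neg, ← hk', h2]; push_cast; ring⟩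

omit [Fintype ι] in
lemma exists_two_mul_eq_int_of_abs_eq_one [DecidableEq V] (hsupp : ∀ i, ∀ v ∉ A, M i v = 0)
    {ρ : ι} {u : V} (hρu : |M ρ u| = 1) {k : ℤ} (hk : (M.map (↑) *ᵥ y) ρ = k)
    (hA : ∀ v ∈ A.erase u, ∃ k : ℤ, 2 * y v = k) : ∃ k : ℤ, 2 * y u = k := by
  suffices 2 * y u ∈ (⊥ : Subring ℝ) by
    obtain ⟨n, hn⟩ := Subring.mem_bot.1 this
    exact ⟨n, hn.symm⟩
  have hterm : ∀ v ∈ ({u}ᶜ : Finset V), (M ρ v : ℝ) * (2 * y v) ∈ (⊥ : Subring ℝ) := by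
    intro v hv
    by_cases hvA : v ∈ A
    · obtain ⟨n, hn⟩ := hA v (mem_erase.2 ⟨by simpa using hv, hvA⟩)
      exact Subring.mem_bot.2 ⟨M ρ v * n, by rw [hn]; push_cast; ring⟩
    · simp [hsupp ρ v hvA]
  have hsplit : (k : ℝ) = M ρ u * y u + ∑ v ∈ {u}ᶜ, M ρ v * y v := by
    rw [← hk]
    exact Fintype.sum_eq_add_sum_compl u _
  have hdouble : ∑ v ∈ ({u}ᶜ : Finset V), (M ρ v : ℝ) * (2 * y v) =
      2 * ∑ v ∈ {u}ᶜ, M ρ v * y v := by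
    rw [mul_sum]
    exact sum_congr rfl fun v _ => by ring
  have hsq : (M ρ u : ℝ) * M ρ u = 1 := by
    exact_mod_cast (abs_mul_abs_self (M ρ u)).symm.trans (by rw [hρu, one_mul])
  have : 2 * y u = M ρ u * (2 * k - ∑ v ∈ {u}ᶜ, M ρ v * (2 * y v)) := by
    linear_combination (-2 * (M ρ u : ℝ)) * hsplit + (M ρ u : ℝ) * hdouble - 2 * y u * hsq
  rw [this]
  exact mul_mem (intCast_mem _ _) (sub_mem (mul_mem (ofNat_mem _ 2) (intCast_mem _ _))
    (sum_mem hterm))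

theorem IsRigidOn.exists_two_mul_eq_int (h : M.IsRigidOn A) (hsupp : ∀ i, ∀ v ∉ A, M i v = 0)
    (hcol : ∀ v ∈ A, ∑ i, |M i v| ≤ 2) (hy : ∀ i, ∃ k : ℤ, (M.map (↑) *ᵥ y) i = k) :
    ∀ v ∈ A, ∃ k : ℤ, 2 * y v = k := by
  classical
  induction A using Finset.strongInduction generalizing M with
  | H A ih =>
  by_cases hpiv : ∃ u ∈ A, ∃ ρ, |M ρ u| = 1
  · obtain ⟨u, hu, ρ, hρu⟩ := hpiv
    have hA := ih (A.erase u) (erase_ssubset hu) (h.pivot hu hρu)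
      (fun i v hv => by
        by_cases hvu : v = u
        · exact hvu ▸ pivot_apply_col M hρu i
        · have hvA : v ∉ A := fun hvA => hv (mem_erase.2 ⟨hvu, hvA⟩)
          rw [pivot_apply, hsupp i v hvA, hsupp ρ v hvA, mul_zero, sub_zero, ite_self])
      (fun v hv => (sum_abs_pivot_le M hρu (hcol u hu) v).trans (hcol v (mem_of_mem_erase hv)))
      (fun i => by
        obtain ⟨k, hk⟩ := hy i
        obtain ⟨kρ, hkρ⟩ := hy ρ
        rw [pivot_map_mulVec, hk, hkρ]
        split_ifs
        · exact ⟨0, by simp⟩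
        · exact ⟨k - M i u * M ρ u * kρ, by push_cast; ring⟩)
    intro v hv
    obtain ⟨k, hk⟩ := hy ρ
    obtain rfl | hvu := eq_or_ne v u
    · exact exists_two_mul_eq_int_of_abs_eq_one hsupp hρu hk hA
    · exact hA v (mem_erase.2 ⟨hvu, hv⟩)
  · push Not at hpiv
    exact h.exists_two_mul_eq_int_of_forall_abs_ne_one hsupp hcol hpiv hy

end Rigid
end Matrix

lemma eq_zero_of_mem_extremePoints {E : Type*} [AddCommGroup E] [Module ℝ E] {P : Set E}
    {z d : E} (hz : z ∈ Set.extremePoints ℝ P) (hadd : z + d ∈ P) (hsub : z - d ∈ P) : d = 0 := by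
  have := (mem_extremePoints.1 hz).2 _ hadd _ hsub (mem_openSegment_add_sub z d)
  simpa using this.1

lemma eventually_nonneg_add_mul {α β : ℝ} (hα : 0 ≤ α) (hβ : α = 0 → β = 0) :
    ∀ᶠ t in 𝓝 (0 : ℝ), 0 ≤ α + t * β := by
  obtain rfl | hα := hα.eq_or_lt
  · simp [hβ rfl]
  · have : Tendsto (fun t : ℝ => α + t * β) (𝓝 0) (𝓝 α) :=
      (by fun_prop : Continuous fun t : ℝ => α + t * β).tendsto' 0 α (by simp)
    exact (this.eventually (lt_mem_nhds hα)).mono fun t ht => ht.le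

lemma eq_half_of_two_mul_eq_int {t : ℝ} (h0 : 0 < t) (h1 : t < 1) {k : ℤ} (hk : 2 * t = k) :
    t = 1 / 2 := by
  have : k = 1 := by
    have : (0 : ℝ) < k := by linarith
    have : (k : ℝ) < 2 := by linarith
    norm_cast at *
    omega
  rw [this, Int.cast_one] at hk
  linarith

section Perturbation

variable {J S : Type*} [Fintype J] [Fintype S] {B : ℕ} {T : J → Finset S} {len : J → ℕ}

variable (B T len) in
def fracSchedules : Set ((J → S → ℝ) × (S → ℝ)) := {p | IsFracSchedule B T len p.1 p.2}

lemma isCompact_fracSchedules : IsCompact (fracSchedules B T len) := by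
  have hclosed : IsClosed (fracSchedules B T len) := by
    simp only [fracSchedules, IsFracSchedule, Set.ofPred_and, Set.ofPred_forall]
    repeat' first
      | apply IsClosed.inter
      | (apply isClosed_iInter; intro)
      | apply isClosed_le <;> fun_prop
      | apply isClosed_eq <;> fun_prop
  refine (isCompact_Icc (a := 0) (b := 1)).of_isClosed_subset hclosed ?_
  rintro ⟨x, a⟩ ⟨hx0, ha, -, -, hxa, -⟩
  exact ⟨⟨fun j s => hx0 j s, fun s => (ha s).1⟩,
    ⟨fun j s => (hxa j s).trans (ha s).2, fun s => (ha s).2⟩⟩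

structure IsTightDirection (B : ℕ) (x : J → S → ℝ) (a : S → ℝ) (dx : J → S → ℝ) (da : S → ℝ) :
    Prop where
  x_eq_zero : ∀ j s, x j s = 0 → dx j s = 0
  a_eq_zero : ∀ s, a s = 0 → da s = 0
  a_eq_one : ∀ s, a s = 1 → da s = 0
  x_eq_a : ∀ j s, x j s = a s → dx j s = da s
  sum_job : ∀ j, ∑ s, dx j s = 0
  sum_slot : ∀ s, ∑ j, x j s = B * a s → ∑ j, dx j s = B * da s

lemma IsFracSchedule.eventually_add_smul {x : J → S → ℝ} {a : S → ℝ} {dx : J → S → ℝ}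
    {da : S → ℝ} (h : IsFracSchedule B T len x a) (hd : IsTightDirection B x a dx da) :
    ∀ᶠ t in 𝓝 (0 : ℝ), IsFracSchedule B T len (x + t • dx) (a + t • da) := by
  obtain ⟨hx0, ha, hxT, hsum, hxa, hload⟩ := h
  filter_upwards [
    eventually_all.2 fun j => eventually_all.2 fun s =>
      eventually_nonneg_add_mul (hx0 j s) (hd.x_eq_zero j s),
    eventually_all.2 fun s => eventually_nonneg_add_mul (ha s).1 (hd.a_eq_zero s),
    eventually_all.2 fun s => eventually_nonneg_add_mul (β := -da s) (sub_nonneg.2 (ha s).2)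
      fun h1 => by rw [hd.a_eq_one s (by linarith), neg_zero],
    eventually_all.2 fun j => eventually_all.2 fun s =>
      eventually_nonneg_add_mul (β := da s - dx j s) (sub_nonneg.2 (hxa j s))
      fun h1 => by rw [hd.x_eq_a j s (by linarith), sub_self],
    eventually_all.2 fun s =>
      eventually_nonneg_add_mul (β := B * da s - ∑ j, dx j s) (sub_nonneg.2 (hload s))
      fun h1 => by rw [hd.sum_slot s (by linarith), sub_self]]
    with t hx0' ha0' ha1' hxa' hload'
  simp only [IsFracSchedule, Pi.add_apply, Pi.smul_apply, smul_eq_mul]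
  refine ⟨hx0', fun s => ⟨ha0' s, ?_⟩, fun j s hs => ?_, fun j => ?_, fun j s => ?_, fun s => ?_⟩
  · linear_combination ha1' s
  · rw [hxT j s hs, hd.x_eq_zero j s (hxT j s hs), mul_zero, add_zero]
  · rw [sum_add_distrib, ← mul_sum, hsum, hd.sum_job, mul_zero, add_zero]
  · linear_combination hxa' j s
  · rw [sum_add_distrib, ← mul_sum]
    linear_combination hload' s

theorem exists_optimal_isFracSchedule_forall_isTightDirection
    (hex : ∃ x a, IsFracSchedule B T len x a) :
    ∃ x a, IsFracSchedule B T len x a ∧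
      (∀ x' a', IsFracSchedule B T len x' a' → ∑ s, a s ≤ ∑ s, a' s) ∧
      ∀ dx da, IsTightDirection B x a dx da → dx = 0 ∧ da = 0 := by
  obtain ⟨x₀, a₀, h₀⟩ := hex
  obtain ⟨p, hp, hmin⟩ := isCompact_fracSchedules.exists_isMinOn ⟨(x₀, a₀), h₀⟩
    (by fun_prop : Continuous fun q : (J → S → ℝ) × (S → ℝ) => ∑ s, q.2 s).continuousOn
  set P := fracSchedules B T len ∩ {q | ∑ s, q.2 s ≤ ∑ s, p.2 s}
  have hP : IsCompact P :=
    isCompact_fracSchedules.inter_right (isClosed_le (by fun_prop) (by fun_prop))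
  obtain ⟨⟨x, a⟩, hz⟩ := hP.extremePoints_nonempty ⟨p, hp, Set.mem_ofPred.2 le_rfl⟩
  obtain ⟨h, hle⟩ := hz.1
  have hopt : ∀ x' a', IsFracSchedule B T len x' a' → ∑ s, a s ≤ ∑ s, a' s :=
    fun x' a' h' => hle.trans (hmin (a := (x', a')) h')
  refine ⟨x, a, h, hopt, fun dx da hd => ?_⟩
  have hev := (h.eventually_add_smul hd).and
    ((continuous_neg.tendsto' (0 : ℝ) 0 neg_zero).eventually (h.eventually_add_smul hd))
  obtain ⟨t, ⟨hadd, hsub⟩, ht⟩ :=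
    ((hev.filter_mono nhdsWithin_le_nhds).and (self_mem_nhdsWithin (s := {0}ᶜ))).exists
  have hsum : ∀ c : ℝ, ∑ s, (a + c • da) s = ∑ s, a s + c * ∑ s, da s := fun c => by
    simp [sum_add_distrib, mul_sum]
  have hda : t * ∑ s, da s = 0 := by
    have := hopt _ _ hadd
    have := hopt _ _ hsub
    rw [hsum] at *
    linarith
  have hmem : ∀ c : ℝ, IsFracSchedule B T len (x + c • dx) (a + c • da) →
      c * ∑ s, da s = 0 → (x, a) + c • (dx, da) ∈ P := fun c hc hc0 =>
    ⟨hc, show ∑ s, (a + c • da) s ≤ _ by rw [hsum, hc0, add_zero]; exact hle⟩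
  have key := eq_zero_of_mem_extremePoints hz (hmem t hadd hda) (by
    rw [sub_eq_add_neg, ← neg_smul]
    exact hmem (-t) hsub (by rw [neg_mul, hda, neg_zero]))
  simpa [smul_eq_zero, show t ≠ 0 from ht] using key

end Perturbation

noncomputable section TightSystem

variable {J S : Type*} (x : J → S → ℝ) (a : S → ℝ)

def IsFreeX (j : J) (s : S) : Prop := 0 < x j s ∧ x j s < a s

def IsFreeA (s : S) : Prop := 0 < a s ∧ a s < 1

def IsTiedX (j : J) (s : S) : Prop := x j s = a s ∧ IsFreeA a s

def scheduleVector : (J × S) ⊕ S → ℝ := Sum.elim (fun e => x e.1 e.2) a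

open Classical in
def liftX (g : (J × S) ⊕ S → ℝ) (j : J) (s : S) : ℝ :=
  if IsFreeX x a j s then g (.inl (j, s)) else if IsTiedX x a j s then g (.inr s) else 0

open Classical in
def liftA (g : (J × S) ⊕ S → ℝ) (s : S) : ℝ :=
  if IsFreeA a s then g (.inr s) else 0

variable [Fintype J] [Fintype S]

def IsSaturated (s : S) : Prop := ∑ j, x j s = 2 * a s

open Classical in
def freeVars : Finset ((J × S) ⊕ S) :=
  {v | Sum.elim (fun e => IsFreeX x a e.1 e.2) (IsFreeA a) v}

open Classical in
/-- The constraints tight at `(x, a)` as equations in the free values: row `inl j` is the job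
constraint of `j`, row `inr s` the load constraint of `s` if it is saturated (zero otherwise);
column `inl (j, s)` stands for `x j s` and column `inr s` for `a s`. A tied `x j s` is replaced
by `a s`, and values equal to `1` go to the right-hand side. -/
def tightMatrix : Matrix (J ⊕ S) ((J × S) ⊕ S) ℤ := of fun
  | .inl j, .inl (j', s) => if j' = j ∧ IsFreeX x a j' s then 1 else 0
  | .inl j, .inr s => if IsTiedX x a j s then 1 else 0
  | .inr s, .inl (j, s') => if s' = s ∧ IsSaturated x a s ∧ IsFreeX x a j s' then 1 else 0
  | .inr s, .inr s' =>
    if s' = s ∧ IsSaturated x a s ∧ IsFreeA a s' then #{j | IsTiedX x a j s} - 2 else 0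

variable {x a} {T : J → Finset S} {len : J → ℕ}

@[simp]
lemma mem_freeVars_inl {j : J} {s : S} : .inl (j, s) ∈ freeVars x a ↔ IsFreeX x a j s := by
  simp [freeVars]

@[simp]
lemma mem_freeVars_inr {s : S} : .inr s ∈ freeVars x a ↔ IsFreeA a s := by
  simp [freeVars]

omit [Fintype J] [Fintype S] in
open Classical in
lemma liftX_eq_add (g : (J × S) ⊕ S → ℝ) (j : J) (s : S) :
    liftX x a g j s = (if IsFreeX x a j s then g (.inl (j, s)) else 0) +
      if IsTiedX x a j s then g (.inr s) else 0 := by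
  by_cases hF : IsFreeX x a j s
  · have hT : ¬IsTiedX x a j s := fun hT => hF.2.ne hT.1
    simp [liftX, hF, hT]
  · simp [liftX, hF]

lemma tightMatrix_mulVec_inl (g : (J × S) ⊕ S → ℝ) (j : J) :
    ((tightMatrix x a).map (↑) *ᵥ g) (.inl j) = ∑ s, liftX x a g j s := by
  classical
  simp [tightMatrix, mulVec, dotProduct, Fintype.sum_sum_type, Fintype.sum_prod_type,
    liftX_eq_add, sum_add_distrib, ite_and]

open Classical in
lemma tightMatrix_mulVec_inr (g : (J × S) ⊕ S → ℝ) (s : S) :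
    ((tightMatrix x a).map (↑) *ᵥ g) (.inr s) =
      if IsSaturated x a s then ∑ j, liftX x a g j s - 2 * liftA a g s else 0 := by
  by_cases hsat : IsSaturated x a s
  · have htied : ∑ j, (if IsTiedX x a j s then g (.inr s) else 0) =
        (if IsFreeA a s then (#{j | IsTiedX x a j s} : ℝ) else 0) * g (.inr s) := by
      rw [← sum_filter, sum_const, nsmul_eq_mul]
      split_ifs with hfree
      · rfl
      · simp [filter_eq_empty_iff.2 fun j _ (hT : IsTiedX x a j s) => hfree hT.2]
    simp [tightMatrix, mulVec, dotProduct, Fintype.sum_sum_type, Fintype.sum_prod_type,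
      liftX_eq_add, liftA, sum_add_distrib, ite_and, hsat, htied]
    split_ifs <;> ring
  · simp [tightMatrix, mulVec, dotProduct, Fintype.sum_sum_type, hsat]

open Classical in
lemma IsFracSchedule.card_isTiedX_le_two (h : IsFracSchedule 2 T len x a) {s : S}
    (hs : IsFreeA a s) : #{j | IsTiedX x a j s} ≤ 2 := by
  obtain ⟨hx0, -, -, -, -, hload⟩ := h
  have : (#{j | IsTiedX x a j s} : ℝ) * a s ≤ 2 * a s :=
    calc (#{j | IsTiedX x a j s} : ℝ) * a s = ∑ j ∈ {j | IsTiedX x a j s}, x j s := by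
          rw [sum_congr rfl fun j hj => (mem_filter.1 hj).2.1, sum_const, nsmul_eq_mul]
      _ ≤ ∑ j, x j s := sum_le_sum_of_subset_of_nonneg (filter_subset _ _) fun j _ _ => hx0 j s
      _ ≤ 2 * a s := by simpa using hload s
  exact_mod_cast le_of_mul_le_mul_right this hs.1

lemma tightMatrix_eq_zero_of_notMem {v : (J × S) ⊕ S} (hv : v ∉ freeVars x a) (i : J ⊕ S) :
    tightMatrix x a i v = 0 := by
  rcases i with j | s <;> rcases v with ⟨j', s'⟩ | s' <;>
    simp_all [tightMatrix, freeVars, IsTiedX]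

lemma IsFracSchedule.sum_abs_tightMatrix_le (h : IsFracSchedule 2 T len x a)
    {v : (J × S) ⊕ S} (hv : v ∈ freeVars x a) : ∑ i, |tightMatrix x a i v| ≤ 2 := by
  classical
  rcases v with ⟨j, s⟩ | s
  · have hF : IsFreeX x a j s := mem_freeVars_inl.1 hv
    simp [Fintype.sum_sum_type, tightMatrix, hF, apply_ite (abs : ℤ → ℤ), ite_and]
    split_ifs <;> norm_num
  · have hA : IsFreeA a s := mem_freeVars_inr.1 hv
    have := h.card_isTiedX_le_two hA
    simp [Fintype.sum_sum_type, tightMatrix, hA, apply_ite (abs : ℤ → ℤ), ite_and]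
    split_ifs
    · rw [abs_of_nonpos (by omega)]
      omega
    · omega

lemma isTightDirection_liftX {g : (J × S) ⊕ S → ℝ}
    (hg : (tightMatrix x a).map (↑) *ᵥ g = 0) :
    IsTightDirection 2 x a (liftX x a g) (liftA a g) where
  x_eq_zero j s hx := by
    have hF : ¬IsFreeX x a j s := fun hF => hF.1.ne' hx
    have hT : ¬IsTiedX x a j s := fun hT => hT.2.1.ne' (hT.1 ▸ hx)
    simp [liftX, hF, hT]
  a_eq_zero s ha := by simp [liftA, IsFreeA, ha]
  a_eq_one s ha := by simp [liftA, IsFreeA, ha]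
  x_eq_a j s hxa := by
    have hF : ¬IsFreeX x a j s := fun hF => hF.2.ne hxa
    by_cases hA : IsFreeA a s
    · simp [liftX, liftA, hF, hA, IsTiedX, hxa]
    · simp [liftX, liftA, hF, hA, IsTiedX]
  sum_job j := by rw [← tightMatrix_mulVec_inl, hg, Pi.zero_apply]
  sum_slot s hs := by
    have := tightMatrix_mulVec_inr (x := x) (a := a) g s
    rw [hg, Pi.zero_apply, if_pos (by simpa [IsSaturated] using hs)] at this
    push_cast
    linarith

lemma IsFracSchedule.liftX_scheduleVector (h : IsFracSchedule 2 T len x a) (j : J) (s : S) :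
    liftX x a (scheduleVector x a) j s = x j s - if x j s = 1 then 1 else 0 := by
  obtain ⟨hx0, ha, -, -, hxa, -⟩ := h
  unfold liftX
  by_cases hF : IsFreeX x a j s
  · simp [hF, scheduleVector, (hF.2.trans_le (ha s).2).ne]
  by_cases hT : IsTiedX x a j s
  · simp [hF, hT, scheduleVector, hT.1, hT.2.2.ne]
  rcases (hx0 j s).eq_or_lt with hx | hx
  · simp [hF, hT, ← hx]
  · have hxa : x j s = a s := (hxa j s).antisymm (not_lt.1 fun hlt => hF ⟨hx, hlt⟩)
    have ha1 : a s = 1 := by_contra fun ha1 => hT ⟨hxa, hxa ▸ hx, (ha s).2.lt_of_ne ha1⟩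
    simp [hF, hT, hxa, ha1]

lemma IsFracSchedule.liftA_scheduleVector (h : IsFracSchedule 2 T len x a) (s : S) :
    liftA a (scheduleVector x a) s = a s - if a s = 1 then 1 else 0 := by
  unfold liftA
  by_cases hA : IsFreeA a s
  · simp [hA, scheduleVector, hA.2.ne]
  · rcases (h.2.1 s).1.eq_or_lt with ha | ha
    · simp [hA, ← ha]
    · have ha1 : a s = 1 := by_contra fun ha1 => hA ⟨ha, (h.2.1 s).2.lt_of_ne ha1⟩
      simp [hA, ha1]

lemma IsFracSchedule.exists_tightMatrix_mulVec_eq_int (h : IsFracSchedule 2 T len x a)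
    (i : J ⊕ S) : ∃ k : ℤ, ((tightMatrix x a).map (↑) *ᵥ scheduleVector x a) i = k := by
  rcases i with j | s
  · refine ⟨len j - #{s | x j s = 1}, ?_⟩
    simp [tightMatrix_mulVec_inl, h.liftX_scheduleVector, sum_sub_distrib, h.2.2.2.1 j]
  · by_cases hs : IsSaturated x a s
    · refine ⟨2 * (if a s = 1 then 1 else 0) - #{j | x j s = 1}, ?_⟩
      simp only [tightMatrix_mulVec_inr, if_pos hs, h.liftX_scheduleVector,
        h.liftA_scheduleVector, sum_sub_distrib, show ∑ j, x j s = 2 * a s from hs, sum_boole]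
      push_cast
      ring
    · exact ⟨0, by simp [tightMatrix_mulVec_inr, hs]⟩

lemma isRigidOn_tightMatrix
    (hrig : ∀ dx da, IsTightDirection 2 x a dx da → dx = 0 ∧ da = 0) :
    (tightMatrix x a).IsRigidOn (freeVars x a) := by
  intro d _ hd v hv
  obtain ⟨hx, ha⟩ := hrig _ _ (isTightDirection_liftX hd)
  rcases v with ⟨j, s⟩ | s
  · have hF : IsFreeX x a j s := mem_freeVars_inl.1 hv
    simpa [liftX, hF] using congrFun (congrFun hx j) s
  · have hA : IsFreeA a s := mem_freeVars_inr.1 hv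
    simpa [liftA, hA] using congrFun ha s

theorem IsFracSchedule.half_integral_of_forall_isTightDirection (h : IsFracSchedule 2 T len x a)
    (hrig : ∀ dx da, IsTightDirection 2 x a dx da → dx = 0 ∧ da = 0) :
    (∀ j s, x j s = 0 ∨ x j s = 1 / 2 ∨ x j s = 1) ∧ (∀ s, a s = 0 ∨ a s = 1 / 2 ∨ a s = 1) := by
  have hhalf := (isRigidOn_tightMatrix hrig).exists_two_mul_eq_int
    (fun i v hv => tightMatrix_eq_zero_of_notMem hv i) (fun v hv => h.sum_abs_tightMatrix_le hv)
    h.exists_tightMatrix_mulVec_eq_int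
  obtain ⟨hx0, ha01, -, -, hxa, -⟩ := h
  have ha : ∀ s, a s = 0 ∨ a s = 1 / 2 ∨ a s = 1 := by
    intro s
    rcases (ha01 s).1.eq_or_lt with ha0 | ha0
    · exact .inl ha0.symm
    rcases (ha01 s).2.lt_or_eq with ha1 | ha1
    · obtain ⟨k, hk⟩ := hhalf (.inr s) (mem_freeVars_inr.2 ⟨ha0, ha1⟩)
      exact .inr (.inl (eq_half_of_two_mul_eq_int ha0 ha1 hk))
    · exact .inr (.inr ha1)
  refine ⟨fun j s => ?_, ha⟩
  rcases (hx0 j s).eq_or_lt with hx0 | hx0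
  · exact .inl hx0.symm
  rcases (hxa j s).lt_or_eq with hxa | hxa
  · obtain ⟨k, hk⟩ := hhalf (.inl (j, s)) (mem_freeVars_inl.2 ⟨hx0, hxa⟩)
    exact .inr (.inl (eq_half_of_two_mul_eq_int hx0 (hxa.trans_le (ha01 s).2) hk))
  · exact hxa ▸ ha s

end TightSystem

theorem half_integral_optimal_frac_schedule_B2_general
    {J S : Type*} [Fintype J] [Fintype S]
    (T : J → Finset S) (len : J → ℕ)
    (hex : ∃ (x : J → S → ℝ) (a : S → ℝ), IsFracSchedule 2 T len x a) :
    ∃ (x : J → S → ℝ) (a : S → ℝ), IsFracSchedule 2 T len x a ∧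
      (∀ (x' : J → S → ℝ) (a' : S → ℝ), IsFracSchedule 2 T len x' a' →
        ∑ s, a s ≤ ∑ s, a' s) ∧
      (∀ j s, x j s = 0 ∨ x j s = 1 / 2 ∨ x j s = 1) ∧
      (∀ s, a s = 0 ∨ a s = 1 / 2 ∨ a s = 1) := by
  obtain ⟨x, a, h, hopt, hrig⟩ := exists_optimal_isFracSchedule_forall_isTightDirection hex
  exact ⟨x, a, h, hopt, h.half_integral_of_forall_isTightDirection hrig⟩

/-- For `B = 2`, if some fractional schedule exists, then there is a fractional
schedule attaining the minimum fractional active time in which every `x j s` and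
every `a s` lies in `{0, 1/2, 1}`. -/
theorem half_integral_optimal_frac_schedule_B2
    {J S : Type*} [Fintype J] [Fintype S]
    (T : J → Finset S) (len : J → ℕ) (hlen : ∀ j, 0 < len j)
    (hex : ∃ (x : J → S → ℝ) (a : S → ℝ), IsFracSchedule 2 T len x a) :
    ∃ (x : J → S → ℝ) (a : S → ℝ), IsFracSchedule 2 T len x a ∧
      (∀ (x' : J → S → ℝ) (a' : S → ℝ), IsFracSchedule 2 T len x' a' →
        ∑ s, a s ≤ ∑ s, a' s) ∧
      (∀ j s, x j s = 0 ∨ x j s = 1 / 2 ∨ x j s = 1) ∧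
      (∀ s, a s = 0 ∨ a s = 1 / 2 ∨ a s = 1) :=
  half_integral_optimal_frac_schedule_B2_general T len hex
end

section
/- Let B = 2 and consider a unit-job multi-slot instance. Let ι* be the maximum cardinality of a schedulable subset of J. Then for any two schedulable subsets S₁, S₂ ⊆ J with |S₁| = |S₂| = ι*, the minimum active time over all schedules of S₁ equals the minimum active time over all schedules of S₂. In other words, the minimum number of active slots needed to schedule ι* jobs can be achieved using any set of ι* jobs that can be scheduled. -/
open Finset

/-- A schedule of the subset `J'` of unit jobs: each job of `J'` is assigned one of
its feasible slots, with at most `B` jobs of `J'` per slot. -/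
def IsPartialSchedule {J S : Type*} [DecidableEq S]
    (B : ℕ) (T : J → Finset S) (J' : Finset J) (σ : J → S) : Prop :=
  (∀ j ∈ J', σ j ∈ T j) ∧ ∀ s : S, (J'.filter (fun j => σ j = s)).card ≤ B

/-- A subset of jobs is schedulable if some schedule of it exists. -/
def Schedulable {J S : Type*} [DecidableEq S]
    (B : ℕ) (T : J → Finset S) (J' : Finset J) : Prop :=
  ∃ σ : J → S, IsPartialSchedule B T J' σ

/-!
The schedulable sets are the independent sets of a transversal matroid (every slot taken `B`
times), and the argument is the usual augmenting-path exchange. Let `A`, `A'` be schedulable sets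
of maximum size, `σ` a schedule of `A`, `τ` one of `A'`, and `p ∈ A' \ A`. Put `p` into the slot
`τ p`; if that slot is full under `σ`, it holds a job `q` with `q ∉ A'` or `τ q ≠ τ p`,
since otherwise `τ` would overload it. Evict `q`: if `q ∉ A'`, we have traded `q` for `p` without
changing any slot load; otherwise `q` is the next job to place, and the schedule now disagrees
with `τ` on fewer jobs of `A ∩ A'`. By maximality of `A` this never ends at a free slot, so
repeated trades turn `A` into `A'` keeping the load of every slot, hence the set of active slots.
-/

section

variable {J S : Type*} [DecidableEq S] {B : ℕ} {T : J → Finset S}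

def slotLoad (A : Finset J) (σ : J → S) (s : S) : ℕ := #{j ∈ A | σ j = s}

theorem image_eq_of_slotLoad_eq {A A' : Finset J} {σ ρ : J → S}
    (h : slotLoad A σ = slotLoad A' ρ) : A.image σ = A'.image ρ := by
  ext s
  have hs := congrFun h s
  simp only [slotLoad] at hs
  rw [mem_image, mem_image, ← filter_nonempty_iff, ← filter_nonempty_iff, ← card_pos,
    ← card_pos, hs]

def activeTimes (B : ℕ) (T : J → Finset S) (A : Finset J) : Set ℕ :=
  {n | ∃ σ : J → S, IsPartialSchedule B T A σ ∧ #(A.image σ) = n}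

section Exchange

variable [DecidableEq J]

theorem slotLoad_update_insert_erase {A : Finset J} {σ : J → S} {p q : J}
    (hq : q ∈ A) (hp : p ∉ A) :
    slotLoad (insert p (A.erase q)) (Function.update σ p (σ q)) = slotLoad A σ := by
  ext s
  have hrest : {j ∈ A.erase q | Function.update σ p (σ q) j = s} =
      {j ∈ A | σ j = s}.erase q := by
    rw [← filter_erase]
    refine filter_congr fun j hj => ?_
    rw [Function.update_of_ne (ne_of_mem_of_not_mem (mem_of_mem_erase hj) hp)]
  simp only [slotLoad]
  rw [filter_insert, Function.update_self, hrest]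
  split_ifs with hs
  · have hqs : q ∈ {j ∈ A | σ j = s} := mem_filter.2 ⟨hq, hs⟩
    rw [card_insert_of_notMem (by simp [hp]), card_erase_add_one hqs]
  · rw [erase_eq_of_notMem (by simp [hs])]

namespace IsPartialSchedule

theorem update_insert_erase {A : Finset J} {σ : J → S} {p q : J}
    (hσ : IsPartialSchedule B T A σ) (hq : q ∈ A) (hp : p ∉ A) (hqp : σ q ∈ T p) :
    IsPartialSchedule B T (insert p (A.erase q)) (Function.update σ p (σ q)) := by
  refine ⟨fun j hj => ?_, fun s => ?_⟩
  · rcases mem_insert.1 hj with rfl | hj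
    · rwa [Function.update_self]
    · have hjA := mem_of_mem_erase hj
      rw [Function.update_of_ne (ne_of_mem_of_not_mem hjA hp)]
      exact hσ.1 j hjA
  · exact (congrFun (slotLoad_update_insert_erase hq hp) s).trans_le (hσ.2 s)

theorem update_insert {A : Finset J} {σ : J → S} {p : J} {s : S}
    (hσ : IsPartialSchedule B T A σ) (hp : p ∉ A) (hs : s ∈ T p)
    (hfree : slotLoad A σ s < B) :
    IsPartialSchedule B T (insert p A) (Function.update σ p s) := by
  have hA : ∀ s', {j ∈ A | Function.update σ p s j = s'} = {j ∈ A | σ j = s'} := fun s' =>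
    filter_congr fun j hj => by rw [Function.update_of_ne (ne_of_mem_of_not_mem hj hp)]
  refine ⟨fun j hj => ?_, fun s' => ?_⟩
  · rcases mem_insert.1 hj with rfl | hj
    · rwa [Function.update_self]
    · rw [Function.update_of_ne (ne_of_mem_of_not_mem hj hp)]
      exact hσ.1 j hj
  · rw [filter_insert, Function.update_self, hA]
    split_ifs with h
    · subst h
      rw [card_insert_of_notMem (by simp [hp])]
      exact hfree
    · exact hσ.2 s'

theorem exists_mem_of_le_slotLoad {A A' : Finset J} {σ τ : J → S} {p : J}
    (hτ : IsPartialSchedule B T A' τ) (hpA' : p ∈ A') (hpA : p ∉ A)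
    (hfull : B ≤ slotLoad A σ (τ p)) :
    ∃ q ∈ A, σ q = τ p ∧ (q ∈ A' → τ q ≠ τ p) := by
  by_contra! h
  have hsub : insert p {j ∈ A | σ j = τ p} ⊆ {j ∈ A' | τ j = τ p} := by
    intro j hj
    rcases mem_insert.1 hj with rfl | hj
    · exact mem_filter.2 ⟨hpA', rfl⟩
    · obtain ⟨hjA, hjs⟩ := mem_filter.1 hj
      exact mem_filter.2 (h j hjA hjs)
  have hcard := card_le_card hsub
  rw [card_insert_of_notMem (by simp [hpA])] at hcard
  have := hτ.2 (τ p)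
  unfold slotLoad at hfull
  omega

theorem schedulable_insert_or_exchange {A A' : Finset J} {σ τ : J → S} {p : J}
    (hσ : IsPartialSchedule B T A σ) (hτ : IsPartialSchedule B T A' τ)
    (hpA' : p ∈ A') (hpA : p ∉ A) :
    Schedulable B T (insert p A) ∨
      ∃ q ∈ A \ A', ∃ ρ, IsPartialSchedule B T (insert p (A.erase q)) ρ ∧
        slotLoad (insert p (A.erase q)) ρ = slotLoad A σ := by
  induction hn : #{j ∈ A ∩ A' | σ j ≠ τ j} using Nat.strong_induction_on
    generalizing A σ p with
  | _ n ih =>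
  by_cases hfree : slotLoad A σ (τ p) < B
  · exact Or.inl ⟨_, hσ.update_insert hpA (hτ.1 p hpA') hfree⟩
  obtain ⟨q, hqA, hqs, hqτ⟩ := exists_mem_of_le_slotLoad hτ hpA' hpA (not_lt.1 hfree)
  have hρ := hσ.update_insert_erase hqA hpA (hqs ▸ hτ.1 p hpA')
  have hload := slotLoad_update_insert_erase (σ := σ) hqA hpA
  by_cases hqA' : q ∈ A'
  swap
  · exact Or.inr ⟨q, mem_sdiff.2 ⟨hqA, hqA'⟩, _, hρ, hload⟩
  have hdis : {j ∈ insert p (A.erase q) ∩ A' | Function.update σ p (σ q) j ≠ τ j} =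
      {j ∈ A ∩ A' | σ j ≠ τ j}.erase q := by
    ext j
    simp only [mem_filter, mem_inter, mem_insert, mem_erase, Function.update_apply]
    grind
  have hlt : #({j ∈ A ∩ A' | σ j ≠ τ j}.erase q) < n := hn ▸ card_erase_lt_of_mem
    (mem_filter.2 ⟨mem_inter.2 ⟨hqA, hqA'⟩, hqs ▸ (hqτ hqA').symm⟩)
  have hqB : q ∉ insert p (A.erase q) := by simp [ne_of_mem_of_not_mem hqA hpA]
  rcases ih _ (hdis ▸ hlt) hρ hqA' hqB rfl with hsched | ⟨q', hq', ρ', hρ', hload'⟩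
  · left
    rwa [insert_comm, insert_erase hqA] at hsched
  · right
    have hset : insert q ((insert p (A.erase q)).erase q') = insert p (A.erase q') := by
      ext j
      simp only [mem_insert, mem_erase]
      grind
    exact ⟨q', by grind, ρ', hset ▸ hρ', hset ▸ hload'.trans hload⟩

end IsPartialSchedule

theorem exists_isPartialSchedule_slotLoad_eq {A A' : Finset J} {σ : J → S}
    (hmax : ∀ J' : Finset J, Schedulable B T J' → #J' ≤ #A) (hA' : Schedulable B T A')
    (hcard : #A' = #A) (hσ : IsPartialSchedule B T A σ) :
    ∃ ρ, IsPartialSchedule B T A' ρ ∧ slotLoad A' ρ = slotLoad A σ := by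
  obtain ⟨τ, hτ⟩ := hA'
  induction hn : #(A' \ A) generalizing A σ with
  | zero =>
    obtain rfl : A' = A := eq_of_subset_of_card_le
      (sdiff_eq_empty_iff_subset.1 (card_eq_zero.1 hn)) hcard.ge
    exact ⟨σ, hσ, rfl⟩
  | succ n ih =>
    obtain ⟨p, hp⟩ : (A' \ A).Nonempty := card_pos.1 (by omega)
    obtain ⟨hpA', hpA⟩ := mem_sdiff.1 hp
    rcases hσ.schedulable_insert_or_exchange hτ hpA' hpA with hsched | ⟨q, hq, ρ, hρ, hload⟩
    · have := hmax _ hsched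
      rw [card_insert_of_notMem hpA] at this
      omega
    have hcard' : #(insert p (A.erase q)) = #A := by
      rw [card_insert_of_notMem (by simp [hpA]), card_erase_add_one (mem_sdiff.1 hq).1]
    have hdiff : A' \ insert p (A.erase q) = (A' \ A).erase p := by
      ext j
      simp only [mem_sdiff, mem_insert, mem_erase]
      grind
    obtain ⟨ρ', hρ', hload'⟩ := ih (hcard' ▸ hmax) (hcard.trans hcard'.symm) hρ
      (by rw [hdiff, card_erase_of_mem hp, hn, Nat.add_sub_cancel])
    exact ⟨ρ', hρ', hload'.trans hload⟩

theorem activeTimes_subset {A A' : Finset J}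
    (hmax : ∀ J' : Finset J, Schedulable B T J' → #J' ≤ #A) (hA' : Schedulable B T A')
    (hcard : #A' = #A) : activeTimes B T A ⊆ activeTimes B T A' := by
  rintro _ ⟨σ, hσ, rfl⟩
  obtain ⟨ρ, hρ, hload⟩ := exists_isPartialSchedule_slotLoad_eq hmax hA' hcard hσ
  exact ⟨ρ, hρ, by rw [image_eq_of_slotLoad_eq hload]⟩

end Exchange

end

theorem min_active_time_independent_of_max_schedulable_set_general
    {J S : Type*} [DecidableEq J] [DecidableEq S]
    (T : J → Finset S)
    (S₁ S₂ : Finset J)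
    (h1 : Schedulable 2 T S₁) (h2 : Schedulable 2 T S₂)
    (hcard : S₁.card = S₂.card)
    (hmax : ∀ J' : Finset J, Schedulable 2 T J' → J'.card ≤ S₁.card) :
    sInf {n : ℕ | ∃ σ : J → S, IsPartialSchedule 2 T S₁ σ ∧ (S₁.image σ).card = n} =
      sInf {n : ℕ | ∃ σ : J → S, IsPartialSchedule 2 T S₂ σ ∧ (S₂.image σ).card = n} :=
  congrArg sInf <| (activeTimes_subset hmax h2 hcard.symm).antisymm
    (activeTimes_subset (hcard ▸ hmax) h1 hcard)

/-- For `B = 2`: if `S₁` and `S₂` are two schedulable subsets of jobs, both of the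
maximum cardinality `ι* = S₁.card = S₂.card`, then the minimum active time over all
schedules of `S₁` equals the minimum active time over all schedules of `S₂`. -/
theorem min_active_time_independent_of_max_schedulable_set
    {J S : Type*} [Fintype J] [Fintype S] [DecidableEq J] [DecidableEq S]
    (T : J → Finset S) (hT : ∀ j, (T j).Nonempty)
    (S₁ S₂ : Finset J)
    (h1 : Schedulable 2 T S₁) (h2 : Schedulable 2 T S₂)
    (hcard : S₁.card = S₂.card)
    (hmax : ∀ J' : Finset J, Schedulable 2 T J' → J'.card ≤ S₁.card) :
    sInf {n : ℕ | ∃ σ : J → S, IsPartialSchedule 2 T S₁ σ ∧ (S₁.image σ).card = n} =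
      sInf {n : ℕ | ∃ σ : J → S, IsPartialSchedule 2 T S₂ σ ∧ (S₂.image σ).card = n} :=
  min_active_time_independent_of_max_schedulable_set_general T S₁ S₂ h1 h2 hcard hmax
end

section
/- Let B = 2 and consider a unit-job multi-slot instance with at least one schedulable job. Let ι* be the maximum cardinality of a schedulable subset of J, and let A* be the minimum active time over all schedules of subsets of cardinality ι*. Then for every natural number α, the maximum cardinality of a subset J' ⊆ J that admits a schedule with at most α active slots equals min(ι*, ι* − A* + α, 2α). -/
open Finset

/-!
Fix a schedule `σ*` of `ι` jobs with `A` active slots; every active slot holds one or two jobs.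
Discarding least loaded slots of `σ*` until `α` remain keeps `min(ι, ι - A + α, 2α)` jobs.
Conversely, a schedule of `n` jobs on at most `α` slots has `n ≤ ι` and `n ≤ 2α`, and it can be
augmented one job at a time, opening at most one new slot per job, to a schedule of `ι` jobs
(as in a transversal matroid: a job of a larger schedule `τ` goes into its `τ`-slot if there
is room, and otherwise replaces a job of that full slot which `τ` places elsewhere).
Hence `A ≤ α + ι - n`.
-/

theorem Finset.image_insert_update {α β : Type*} [DecidableEq α] [DecidableEq β]
    {s : Finset α} {f : α → β} {a : α} {b : β} (ha : a ∉ s) :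
    (insert a s).image (Function.update f a b) = insert b (s.image f) := by
  rw [image_insert, Function.update_self]
  exact congrArg _ (image_congr fun x hx => Function.update_of_ne (ne_of_mem_of_not_mem hx ha) _ _)

namespace IsPartialSchedule

variable {J S : Type*} [DecidableEq S] {B : ℕ} {T : J → Finset S} {I K : Finset J} {σ τ : J → S}

theorem subset (hσ : IsPartialSchedule B T I σ) (hK : K ⊆ I) : IsPartialSchedule B T K σ :=
  ⟨fun j hj => hσ.1 j (hK hj), fun s => (card_le_card (filter_subset_filter _ hK)).trans (hσ.2 s)⟩

theorem card_le_mul_card_image (hσ : IsPartialSchedule B T I σ) : I.card ≤ B * (I.image σ).card :=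
  Finset.card_le_mul_card_image I B fun s _ => hσ.2 s

theorem insert_update [DecidableEq J] {j : J} {s : S} (hσ : IsPartialSchedule B T I σ)
    (hj : j ∉ I) (hs : s ∈ T j) (hload : (I.filter (σ · = s)).card < B) :
    IsPartialSchedule B T (insert j I) (Function.update σ j s) := by
  have hupd : ∀ i ∈ I, Function.update σ j s i = σ i := fun i hi =>
    Function.update_of_ne (ne_of_mem_of_not_mem hi hj) _ _
  refine ⟨fun i hi => ?_, fun u => ?_⟩
  · rcases mem_insert.mp hi with rfl | hi
    · rwa [Function.update_self]
    · rw [hupd i hi]; exact hσ.1 i hi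
  · rw [filter_insert, Function.update_self, filter_congr fun i hi => by rw [hupd i hi]]
    split_ifs with hsu
    · subst hsu
      exact (card_insert_le _ _).trans hload
    · exact hσ.2 u

theorem erase_insert_update [DecidableEq J] {j j' : J} {s : S} (hσ : IsPartialSchedule B T I σ)
    (hj : j ∉ I) (hj' : j' ∈ I) (hs : s ∈ T j) (hσj' : σ j' = s) :
    IsPartialSchedule B T (insert j (I.erase j')) (Function.update σ j s) := by
  refine (hσ.subset (erase_subset j' I)).insert_update (fun h => hj (mem_of_mem_erase h)) hs ?_
  have hj's : j' ∈ I.filter (σ · = s) := mem_filter.mpr ⟨hj', hσj'⟩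
  rw [filter_erase, card_erase_of_mem hj's]
  exact (Nat.sub_lt (card_pos.mpr ⟨j', hj's⟩) one_pos).trans_le (hσ.2 s)

theorem exists_mem_fiber_not_mem_fiber (hτ : IsPartialSchedule B T K τ) {j : J}
    (hjK : j ∈ K) (hjI : j ∉ I) (hload : B ≤ (I.filter (σ · = τ j)).card) :
    ∃ j' ∈ I, σ j' = τ j ∧ (j' ∈ K → τ j' ≠ τ j) := by
  classical
  by_contra! h
  have hsub : insert j (I.filter (σ · = τ j)) ⊆ K.filter (τ · = τ j) :=
    insert_subset (mem_filter.mpr ⟨hjK, rfl⟩) fun i hi =>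
      mem_filter.mpr (h i (mem_filter.mp hi).1 (mem_filter.mp hi).2)
  have := card_le_card hsub
  rw [card_insert_of_notMem fun h => hjI (mem_filter.mp h).1] at this
  have := hτ.2 (τ j)
  omega

theorem exists_card_succ_of_card_lt (hσ : IsPartialSchedule B T I σ)
    (hτ : IsPartialSchedule B T K τ) (hlt : I.card < K.card) :
    ∃ (M : Finset J) (ρ : J → S), M.card = I.card + 1 ∧ IsPartialSchedule B T M ρ ∧
      (M.image ρ).card ≤ (I.image σ).card + 1 := by
  classical
  induction hd : (I.filter fun i => i ∈ K → σ i ≠ τ i).card using Nat.strong_induction_on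
    generalizing I σ with
  | _ d ih =>
  -- `d` counts the jobs of `I` that `σ` does not place as `τ` does; an exchange lowers it.
  obtain ⟨j, hjK, hjI⟩ := exists_mem_notMem_of_card_lt_card hlt
  have hs : τ j ∈ T j := hτ.1 j hjK
  by_cases hload : (I.filter (σ · = τ j)).card < B
  · exact ⟨insert j I, Function.update σ j (τ j), card_insert_of_notMem hjI,
      hσ.insert_update hjI hs hload, by rw [image_insert_update hjI]; exact card_insert_le _ _⟩
  obtain ⟨j', hj'I, hσj', hj'K⟩ := exists_mem_fiber_not_mem_fiber hτ hjK hjI (not_lt.mp hload)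
  set I₁ := insert j (I.erase j')
  set σ₁ := Function.update σ j (τ j)
  have hjI' : j ∉ I.erase j' := fun h => hjI (mem_of_mem_erase h)
  have hcard : I₁.card = I.card := by
    rw [card_insert_of_notMem hjI', card_erase_add_one hj'I]
  have himage : I₁.image σ₁ ⊆ I.image σ := by
    rw [image_insert_update hjI']
    exact insert_subset (hσj' ▸ mem_image_of_mem σ hj'I) (image_subset_image (erase_subset j' I))
  have hd₁ : (I₁.filter fun i => i ∈ K → σ₁ i ≠ τ i) =
      (I.filter fun i => i ∈ K → σ i ≠ τ i).erase j' := by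
    rw [filter_insert, if_neg (by simp [σ₁, hjK]), ← filter_erase]
    exact filter_congr fun i hi => by
      rw [show σ₁ i = σ i from Function.update_of_ne (ne_of_mem_of_not_mem hi hjI') _ _]
  have hj'd : j' ∈ I.filter fun i => i ∈ K → σ i ≠ τ i :=
    mem_filter.mpr ⟨hj'I, fun h => hσj' ▸ (hj'K h).symm⟩
  obtain ⟨M, ρ, hM, hρ, hMρ⟩ := ih _ (hd ▸ card_erase_lt_of_mem hj'd)
    (hσ.erase_insert_update hjI hj'I hs hσj') (hcard ▸ hlt) (by rw [hd₁])
  exact ⟨M, ρ, hM.trans (by rw [hcard]), hρ,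
    hMρ.trans (Nat.add_le_add_right (card_le_card himage) 1)⟩

theorem exists_card_eq_of_card_le (hσ : IsPartialSchedule B T I σ)
    (hτ : IsPartialSchedule B T K τ) (hle : I.card ≤ K.card) :
    ∃ (M : Finset J) (ρ : J → S), M.card = K.card ∧ IsPartialSchedule B T M ρ ∧
      (M.image ρ).card ≤ (I.image σ).card + (K.card - I.card) := by
  induction hk : K.card - I.card generalizing I σ with
  | zero => exact ⟨I, σ, by omega, hσ, le_rfl⟩
  | succ k ih =>
    obtain ⟨M, ρ, hM, hρ, hMρ⟩ := hσ.exists_card_succ_of_card_lt hτ (by omega)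
    obtain ⟨M', ρ', hM', hρ', hM'ρ'⟩ := ih hρ (by omega) (by omega)
    exact ⟨M', ρ', hM', hρ', by omega⟩

theorem exists_subset_card_image_le (hσ : IsPartialSchedule 2 T I σ) (α : ℕ) :
    ∃ K ⊆ I, (K.image σ).card ≤ α ∧
      min I.card (min (I.card - (I.image σ).card + α) (2 * α)) ≤ K.card := by
  induction ha : (I.image σ).card generalizing I with
  | zero => exact ⟨I, subset_rfl, by omega, min_le_left _ _⟩
  | succ a ih =>
    by_cases haα : a + 1 ≤ α
    · exact ⟨I, subset_rfl, by omega, min_le_left _ _⟩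
    obtain ⟨s, hs, hmin⟩ := exists_min_image (I.image σ) (fun s => (I.filter (σ · = s)).card)
      (card_pos.mp (by omega))
    set ℓ := (I.filter (σ · = s)).card
    have hℓ_pos : 1 ≤ ℓ := card_pos.mpr (fiber_nonempty_iff_mem_image.mpr hs)
    have hℓ_le : ℓ ≤ 2 := hσ.2 s
    have hℓ_mul : ℓ * (a + 1) ≤ I.card := ha ▸ mul_card_image_le_card I ℓ hmin
    have hI_le : I.card ≤ 2 * (a + 1) := ha ▸ hσ.card_le_mul_card_image
    have hrest : ℓ + (I.filter fun j => ¬σ j = s).card = I.card :=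
      card_filter_add_card_filter_not _
    have hrest_image : ((I.filter fun j => ¬σ j = s).image σ).card = a := by
      rw [show (I.filter fun j => ¬σ j = s).image σ = (I.image σ).erase s by grind,
        card_erase_of_mem hs, ha, Nat.add_sub_cancel]
    obtain ⟨K, hK, hKα, hKcard⟩ := ih (hσ.subset (filter_subset _ I)) hrest_image
    refine ⟨K, hK.trans (filter_subset _ I), hKα, ?_⟩
    -- A least loaded slot holds one job, or else every slot holds two.
    obtain h | h : ℓ = 1 ∨ ℓ = 2 := by omega
    all_goals rw [h] at hℓ_mul hrest; omega

end IsPartialSchedule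

theorem max_jobs_with_bounded_active_time_general
    {J S : Type*} [DecidableEq S]
    (T : J → Finset S)
    (ι A : ℕ)
    (hι : IsGreatest {n : ℕ | ∃ J' : Finset J, Schedulable 2 T J' ∧ J'.card = n} ι)
    (hA : IsLeast {m : ℕ | ∃ (J' : Finset J) (σ : J → S),
        J'.card = ι ∧ IsPartialSchedule 2 T J' σ ∧ (J'.image σ).card = m} A)
    (α : ℕ) :
    IsGreatest {n : ℕ | ∃ (J' : Finset J) (σ : J → S),
        IsPartialSchedule 2 T J' σ ∧ (J'.image σ).card ≤ α ∧ J'.card = n}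
      (min ι (min (ι - A + α) (2 * α))) := by
  obtain ⟨Jopt, σopt, hJopt, hσopt, hAopt⟩ := hA.1
  refine ⟨?_, ?_⟩
  · obtain ⟨K, hK, hKα, hKcard⟩ := hσopt.exists_subset_card_image_le α
    rw [hJopt, hAopt] at hKcard
    obtain ⟨K', hK'K, hK'card⟩ := exists_subset_card_eq hKcard
    exact ⟨K', σopt, hσopt.subset (hK'K.trans hK),
      (card_le_card (image_subset_image hK'K)).trans hKα, hK'card⟩
  · rintro n ⟨J', σ, hσ, hα, rfl⟩
    have hι' : J'.card ≤ ι := hι.2 ⟨J', ⟨σ, hσ⟩, rfl⟩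
    have h2α : J'.card ≤ 2 * α := hσ.card_le_mul_card_image.trans (by omega)
    obtain ⟨M, ρ, hM, hρ, hMρ⟩ := hσ.exists_card_eq_of_card_le hσopt (hJopt ▸ hι')
    have hAM : A ≤ (M.image ρ).card := hA.2 ⟨M, ρ, hM.trans hJopt, hρ, rfl⟩
    omega

/-- For `B = 2`: let `ι` be the maximum cardinality of a schedulable subset, and
`A` the minimum active time over all schedules of subsets of cardinality `ι`.
Then for every `α`, the maximum cardinality of a subset admitting a schedule with
at most `α` active slots is `min(ι, ι - A + α, 2α)`. -/
theorem max_jobs_with_bounded_active_time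
    {J S : Type*} [Fintype J] [Fintype S] [DecidableEq J] [DecidableEq S] [Nonempty J]
    (T : J → Finset S) (hT : ∀ j, (T j).Nonempty)
    (ι A : ℕ)
    (hι : IsGreatest {n : ℕ | ∃ J' : Finset J, Schedulable 2 T J' ∧ J'.card = n} ι)
    (hA : IsLeast {m : ℕ | ∃ (J' : Finset J) (σ : J → S),
        J'.card = ι ∧ IsPartialSchedule 2 T J' σ ∧ (J'.image σ).card = m} A)
    (α : ℕ) :
    IsGreatest {n : ℕ | ∃ (J' : Finset J) (σ : J → S),
        IsPartialSchedule 2 T J' σ ∧ (J'.image σ).card ≤ α ∧ J'.card = n}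
      (min ι (min (ι - A + α) (2 * α))) :=
  max_jobs_with_bounded_active_time_general T ι A hι hA α
end

section
/- Let B ≥ 1 and consider a feasible unit-job interval instance in which, for every integer t, at most B jobs have deadline t. Let D = min_j d_j be the earliest deadline, let J* = {j : d_j = D} (so |J*| ≤ B), and let F_avail = {j ∉ J* : r_j ≤ D} be the other jobs feasible at slot D. Then there exists a schedule σ of minimum active time and a set F ⊆ F_avail with |F| = min(B − |J*|, |F_avail|) such that σ⁻¹(D) = J* ∪ F and for every f ∈ F and every g ∈ F_avail \ F one has d_f ≤ d_g (i.e., the fillers F are chosen among the available jobs with earliest deadlines). -/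
open Finset

/-!
Fix a schedule `σ` of minimum active time; `k ≥ 1` of its slots lie at or before `D`. Run the
greedy batch at `D` and replace those `k` slots by `D` and the first `k - 1` integers after `D`
that `σ` leaves unused. The other jobs, now released after `D`, fit into the new slots by Hall's
theorem, which for interval windows needs checking only on intervals `[p, q]`. If every job
inside is released after `D`, `σ` already places them there. Otherwise the batch passed over one
of them, so it is full and due by `q`; `σ` fits these jobs and `B` more into its `k + u` slots up
to `q` (`u` of them in `(D, q]`), so `k - 1 + u` slots in `(D, q]` suffice, and the new slots
provide that many unless they fill `(D, q]`, where at most `B` jobs per deadline is enough.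
-/

/-- A schedule of a unit-job interval instance: each job `j` is assigned an integer
slot in `[r j, d j]`, with at most `B` jobs per slot. -/
def IsIntSchedule {J : Type*} [Fintype J] (B : ℕ) (r d : J → ℤ) (σ : J → ℤ) : Prop :=
  (∀ j, r j ≤ σ j ∧ σ j ≤ d j) ∧
    ∀ t : ℤ, (Finset.univ.filter (fun j => σ j = t)).card ≤ B

section General

variable {ι : Type*}

theorem exists_subset_card_eq_forall_le_sdiff {α : Type*} [LinearOrder α] [DecidableEq ι]
    (f : ι → α) {k : ℕ} {s : Finset ι} (hk : k ≤ #s) :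
    ∃ F ⊆ s, #F = k ∧ ∀ x ∈ F, ∀ y ∈ s \ F, f x ≤ f y := by
  induction k with
  | zero => exact ⟨∅, empty_subset s, rfl, by simp⟩
  | succ k ih =>
    obtain ⟨F, hFs, hFk, hF⟩ := ih (by omega)
    have hne : (s \ F).Nonempty := by
      rw [← card_pos, card_sdiff_of_subset hFs]
      omega
    obtain ⟨m, hm, hmin⟩ := (s \ F).exists_min_image f hne
    rw [mem_sdiff] at hm
    refine ⟨insert m F, insert_subset hm.1 hFs, by rw [card_insert_of_notMem hm.2, hFk], ?_⟩
    intro x hx y hy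
    have hy' : y ∈ s \ F := by
      simp only [mem_sdiff, mem_insert, not_or] at hy ⊢
      exact ⟨hy.1, hy.2.2⟩
    rcases mem_insert.mp hx with rfl | hx
    · exact hmin y hy'
    · exact hF x hx y hy'

theorem card_le_mul_card_of_mapsTo [Fintype ι] {β : Type*} [DecidableEq β] {f : ι → β} {B : ℕ}
    (hf : ∀ b, #(univ.filter fun i => f i = b) ≤ B) {s : Finset ι} {t : Finset β}
    (hst : ∀ i ∈ s, f i ∈ t) : #s ≤ B * #t :=
  card_le_mul_card_image_of_maps_to hst B fun b _ =>
    (card_le_card (filter_subset_filter _ (subset_univ s))).trans (hf b)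

theorem card_le_mul_card_biUnion_of_forall_Icc (B : ℕ) (a d : ι → ℤ) (V : Finset ℤ)
    (H : ∀ p q : ℤ, ∀ s : Finset ι, (∀ i ∈ s, p ≤ a i ∧ d i ≤ q) → #s ≤ B * #(V ∩ Icc p q))
    (s : Finset ι) : #s ≤ B * #(s.biUnion fun i => V ∩ Icc (a i) (d i)) := by
  induction s using Finset.strongInduction with
  | H s ih =>
  rcases s.eq_empty_or_nonempty with rfl | hne
  · simp
  obtain ⟨i₀, hi₀, hp⟩ := s.exists_min_image a hne
  obtain ⟨i₁, hi₁, hq⟩ := s.exists_max_image d hne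
  by_cases hgap : ∃ g ∈ Icc (a i₀) (d i₁), ∀ i ∈ s, d i < g ∨ g < a i
  · -- An uncovered slot `g` splits `s` into the jobs due before it and those released after it.
    obtain ⟨g, hg, hgs⟩ := hgap
    rw [mem_Icc] at hg
    set w := fun i => V ∩ Icc (a i) (d i)
    set early := s.filter fun i => d i < g
    set late := s.filter fun i => ¬d i < g
    have hearly : early ⊂ s := filter_ssubset.mpr ⟨i₁, hi₁, by omega⟩
    have hlate : late ⊂ s := filter_ssubset.mpr ⟨i₀, hi₀, by have := hgs i₀ hi₀; omega⟩
    have hdisj : Disjoint (early.biUnion w) (late.biUnion w) := by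
      simp only [disjoint_left, mem_biUnion, mem_inter, mem_Icc, w, early, late, mem_filter]
      rintro t ⟨i, ⟨-, hi⟩, -, -, hti⟩ ⟨i', ⟨hi's, hi'⟩, -, hti', -⟩
      have := hgs i' hi's
      omega
    calc #s = #early + #late := (card_filter_add_card_filter_not _).symm
      _ ≤ B * #(early.biUnion w) + B * #(late.biUnion w) := add_le_add (ih early hearly) (ih late hlate)
      _ = B * #(early.biUnion w ∪ late.biUnion w) := by rw [card_union_of_disjoint hdisj, mul_add]
      _ ≤ B * #(s.biUnion w) := Nat.mul_le_mul_left _ <| card_le_card <| union_subset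
          (biUnion_subset_biUnion_of_subset_left _ (filter_subset _ _))
          (biUnion_subset_biUnion_of_subset_left _ (filter_subset _ _))
  · push Not at hgap
    calc #s ≤ B * #(V ∩ Icc (a i₀) (d i₁)) := H _ _ s fun i hi => ⟨hp i hi, hq i hi⟩
      _ ≤ _ := Nat.mul_le_mul_left _ (card_le_card fun t ht => ?_)
    rw [mem_inter] at ht
    obtain ⟨i, hi, hit⟩ := hgap t ht.2
    exact mem_biUnion.mpr ⟨i, hi, mem_inter.mpr ⟨ht.1, mem_Icc.mpr ⟨by omega, by omega⟩⟩⟩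

theorem exists_isIntSchedule_of_forall_Icc [Fintype ι] (B : ℕ) (a d : ι → ℤ) (V : Finset ℤ)
    (H : ∀ p q : ℤ, ∀ s : Finset ι, (∀ i ∈ s, p ≤ a i ∧ d i ≤ q) → #s ≤ B * #(V ∩ Icc p q)) :
    ∃ τ : ι → ℤ, IsIntSchedule B a d τ ∧ ∀ i, τ i ∈ V := by
  -- Hall's theorem, with each slot of `V` split into `B` places.
  set t : ι → Finset (ℤ × Fin B) := fun i => (V ∩ Icc (a i) (d i)) ×ˢ univ
  have hHall : ∀ s : Finset ι, #s ≤ #(s.biUnion t) := by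
    intro s
    have hprod : s.biUnion t = (s.biUnion fun i => V ∩ Icc (a i) (d i)) ×ˢ univ := by
      ext ⟨x, b⟩
      simp [t]
    rw [hprod, card_product, card_univ, Fintype.card_fin, mul_comm]
    exact card_le_mul_card_biUnion_of_forall_Icc B a d V H s
  obtain ⟨f, hf, hft⟩ := (all_card_le_biUnion_card_iff_exists_injective t).mp hHall
  have hfV : ∀ i, (f i).1 ∈ V ∩ Icc (a i) (d i) := fun i => (mem_product.mp (hft i)).1
  refine ⟨fun i => (f i).1, ⟨fun i => mem_Icc.mp (mem_inter.mp (hfV i)).2, fun s => ?_⟩,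
    fun i => (mem_inter.mp (hfV i)).1⟩
  calc _ ≤ #(univ : Finset (Fin B)) :=
        card_le_card_of_injOn (fun i => (f i).2) (fun _ _ => mem_coe.mpr (mem_univ _))
          fun i hi j hj hij =>
            hf (Prod.ext ((mem_filter.mp hi).2.trans (mem_filter.mp hj).2.symm) hij)
    _ = B := by simp

theorem exists_card_eq_min_le_card_union_inter_Ioc (U : Finset ℤ) (a : ℤ) (k : ℕ) :
    ∃ G : Finset ℤ, #G = k ∧
      ∀ q, min (k + #(U ∩ Ioc a q)) (q - a).toNat ≤ #((U ∪ G) ∩ Ioc a q) := by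
  set C := Ioc a (a + #U + k) \ U
  have hC : k ≤ #C := by
    have : #(Ioc a (a + #U + k)) - #U ≤ #C := le_card_sdiff _ _
    rw [Int.card_Ioc] at this
    omega
  obtain ⟨G, hGC, hGk, hGlow⟩ := exists_subset_card_eq_forall_le_sdiff id hC
  have hG : ∀ x ∈ G, x ∈ Ioc a (a + #U + k) ∧ x ∉ U := fun x hx => mem_sdiff.mp (hGC hx)
  refine ⟨G, hGk, fun q => ?_⟩
  by_cases hfull : Ioc a q ⊆ U ∪ G
  · rw [inter_eq_right.mpr hfull, Int.card_Ioc]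
    exact min_le_right _ _
  obtain ⟨y, hyq, hyUG⟩ := not_subset.mp hfull
  rw [mem_union, not_or] at hyUG
  have hGq : G ⊆ Ioc a q := by
    intro x hx
    have hxC := mem_Ioc.mp (hG x hx).1
    have hyq := mem_Ioc.mp hyq
    by_cases hyC : y ∈ C
    · have := hGlow x hx y (mem_sdiff.mpr ⟨hyC, hyUG.2⟩)
      exact mem_Ioc.mpr ⟨hxC.1, by simp only [id] at this; omega⟩
    · have : ¬y ≤ a + #U + k := fun h => hyC (mem_sdiff.mpr ⟨mem_Ioc.mpr ⟨hyq.1, h⟩, hyUG.1⟩)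
      exact mem_Ioc.mpr ⟨hxC.1, by omega⟩
  have hdisj : Disjoint G (U ∩ Ioc a q) :=
    disjoint_left.mpr fun x hx hxU => (hG x hx).2 (mem_inter.mp hxU).1
  calc min (k + #(U ∩ Ioc a q)) (q - a).toNat ≤ #(G ∪ U ∩ Ioc a q) := by
        rw [card_union_of_disjoint hdisj, hGk]
        exact min_le_left _ _
    _ ≤ #((U ∪ G) ∩ Ioc a q) := card_le_card <| union_subset
        (subset_inter subset_union_right hGq) (inter_subset_inter_right subset_union_left)

end General

section Schedule

variable {J : Type*} [Fintype J] {B : ℕ} {r d : J → ℤ}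

theorem exists_isIntSchedule_forall_card_image_le (h : ∃ σ, IsIntSchedule B r d σ) :
    ∃ σ, IsIntSchedule B r d σ ∧
      ∀ σ', IsIntSchedule B r d σ' → #(univ.image σ) ≤ #(univ.image σ') := by
  obtain ⟨σ, hσ, hmin⟩ :=
    (measure fun σ : J → ℤ => #(univ.image σ)).wf.has_min {σ | IsIntSchedule B r d σ} h
  exact ⟨σ, hσ, fun σ' hσ' => not_lt.mp (hmin σ' hσ')⟩

/-- `W` is the batch a lazy scheduler runs at slot `D`: every job due by `D`, topped up to
capacity by available jobs of earliest deadline. -/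
structure IsGreedyBatch (B : ℕ) (r d : J → ℤ) (D : ℤ) (W : Finset J) : Prop where
  release_le : ∀ w ∈ W, r w ≤ D
  card_le : #W ≤ B
  lt_deadline : ∀ j ∉ W, D < d j
  saturated : ∀ g ∉ W, r g ≤ D → #W = B ∧ ∀ w ∈ W, d w ≤ d g

variable [DecidableEq J]

theorem isGreedyBatch_union (hrd : ∀ j, r j ≤ d j)
    (hdl : ∀ t, #(univ.filter fun j => d j = t) ≤ B) {D : ℤ} (hD : D ∈ lowerBounds (Set.range d))
    {F : Finset J} (hF : F ⊆ univ.filter fun j => d j ≠ D ∧ r j ≤ D)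
    (hFcard : #F = min (B - #(univ.filter fun j => d j = D))
      #(univ.filter fun j => d j ≠ D ∧ r j ≤ D))
    (hFlow : ∀ f ∈ F, ∀ g ∈ (univ.filter fun j => d j ≠ D ∧ r j ≤ D) \ F, d f ≤ d g) :
    IsGreedyBatch B r d D ((univ.filter fun j => d j = D) ∪ F) := by
  have hF' : ∀ f ∈ F, d f ≠ D ∧ r f ≤ D := fun f hf => (mem_filter.mp (hF hf)).2
  have hdisj : Disjoint (univ.filter fun j => d j = D) F :=
    disjoint_left.mpr fun j hj hjF => (hF' j hjF).1 (mem_filter.mp hj).2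
  have hcard := card_union_of_disjoint hdisj
  have hdlD := hdl D
  refine ⟨fun w hw => ?_, by omega, fun j hj => ?_, fun g hg hgr => ?_⟩
  · rcases mem_union.mp hw with hw | hw
    · exact (mem_filter.mp hw).2 ▸ hrd w
    · exact (hF' w hw).2
  · simp only [mem_union, mem_filter, mem_univ, true_and, not_or] at hj
    exact lt_of_le_of_ne (hD ⟨j, rfl⟩) (Ne.symm hj.1)
  · simp only [mem_union, mem_filter, mem_univ, true_and, not_or] at hg
    have hgF : g ∈ (univ.filter fun j => d j ≠ D ∧ r j ≤ D) \ F := by simp [hg, hgr]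
    have hFlt : #F < #(univ.filter fun j => d j ≠ D ∧ r j ≤ D) :=
      card_lt_card ⟨hF, fun h => (mem_sdiff.mp hgF).2 (h (mem_sdiff.mp hgF).1)⟩
    refine ⟨by omega, fun w hw => ?_⟩
    rcases mem_union.mp hw with hw | hw
    · exact (mem_filter.mp hw).2 ▸ hD ⟨g, rfl⟩
    · exact hFlow w hw g hgF

def batchAt (W : Finset J) (D : ℤ) (τ : {j // j ∉ W} → ℤ) (j : J) : ℤ :=
  if h : j ∈ W then D else τ ⟨j, h⟩

variable {W : Finset J} {D : ℤ} {τ : {j // j ∉ W} → ℤ}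

theorem filter_batchAt_eq (hτ : ∀ i, D < τ i) : univ.filter (fun j => batchAt W D τ j = D) = W := by
  ext j
  by_cases hj : j ∈ W
  · simp [batchAt, hj]
  · simpa [batchAt, hj] using (hτ ⟨j, hj⟩).ne'

theorem isIntSchedule_batchAt (hWr : ∀ w ∈ W, r w ≤ D ∧ D ≤ d w) (hWB : #W ≤ B)
    (hτ : IsIntSchedule B (fun i : {j // j ∉ W} => max (r i) (D + 1)) (fun i => d i) τ) :
    IsIntSchedule B r d (batchAt W D τ) := by
  have hτD : ∀ i, D < τ i := fun i => lt_of_lt_of_le (lt_max_of_lt_right (lt_add_one D)) (hτ.1 i).1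
  refine ⟨fun j => ?_, fun t => ?_⟩
  · by_cases hj : j ∈ W
    · simpa [batchAt, hj] using hWr j hj
    · have hr : max (r j) (D + 1) ≤ τ ⟨j, hj⟩ ∧ τ ⟨j, hj⟩ ≤ d j := hτ.1 ⟨j, hj⟩
      simp only [batchAt, hj, dite_false]
      exact ⟨(le_max_left _ _).trans hr.1, hr.2⟩
  by_cases htD : t = D
  · rw [htD, filter_batchAt_eq hτD]
    exact hWB
  calc #(univ.filter fun j => batchAt W D τ j = t)
      ≤ #((univ.filter fun i => τ i = t).map (Function.Embedding.subtype _)) := by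
        refine card_le_card fun j hj => ?_
        have hjW : j ∉ W := fun hjW => htD (by simpa [batchAt, hjW, eq_comm] using hj)
        rw [mem_filter] at hj
        simp only [batchAt, hjW, dite_false] at hj
        exact mem_map.mpr ⟨⟨j, hjW⟩, by simpa using hj.2, rfl⟩
    _ ≤ B := by rw [card_map]; exact hτ.2 t

theorem card_image_batchAt_le {V : Finset ℤ} (hτV : ∀ i, τ i ∈ V) :
    #(univ.image (batchAt W D τ)) ≤ #V + 1 := by
  refine (card_le_card fun t ht => ?_).trans (card_insert_le D V)
  obtain ⟨j, -, rfl⟩ := mem_image.mp ht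
  by_cases hj : j ∈ W
  · simp [batchAt, hj]
  · simp [batchAt, hj, hτV]

theorem card_le_mul_card_inter_Icc_of_isGreedyBatch {σ : J → ℤ} {V : Finset ℤ}
    (hdl : ∀ t, #(univ.filter fun j => d j = t) ≤ B) (hσ : IsIntSchedule B r d σ)
    (hW : IsGreedyBatch B r d D W) (hUV : ∀ t ∈ univ.image σ, D < t → t ∈ V)
    (hVfill : ∀ q, min (#((univ.image σ).filter (· ≤ D)) - 1 + #(univ.image σ ∩ Ioc D q))
      (q - D).toNat ≤ #(V ∩ Ioc D q))
    {p q : ℤ} {s : Finset J} (hsW : ∀ j ∈ s, j ∉ W)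
    (hs : ∀ j ∈ s, p ≤ max (r j) (D + 1) ∧ d j ≤ q) :
    #s ≤ B * #(V ∩ Icc p q) := by
  set U := univ.image σ
  have hσU : ∀ j, σ j ∈ U := fun j => mem_image_of_mem σ (mem_univ j)
  by_cases hg : ∃ g ∈ s, r g ≤ D
  swap
  · push Not at hg
    refine card_le_mul_card_of_mapsTo hσ.2 fun j hj => ?_
    have := hσ.1 j
    have := hs j hj
    have := hg j hj
    exact mem_inter.mpr ⟨hUV _ (hσU j) (by omega), mem_Icc.mpr ⟨by omega, by omega⟩⟩
  obtain ⟨g, hgs, hgr⟩ := hg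
  obtain ⟨hWB, hWg⟩ := hW.saturated g (hsW g hgs) hgr
  have hdead : #s ≤ B * (q - D).toNat := by
    rw [← Int.card_Ioc]
    exact card_le_mul_card_of_mapsTo hdl fun j hj =>
      mem_Ioc.mpr ⟨hW.lt_deadline j (hsW j hj), (hs j hj).2⟩
  -- `σ` runs `s` and the `B` jobs of `W`, all due by `q`, in its slots up to `q`.
  have hslots : #s + B ≤ B * (#(U.filter (· ≤ D)) + #(U ∩ Ioc D q)) := by
    nth_rw 1 [← hWB]
    rw [← card_union_of_disjoint (disjoint_left.mpr hsW)]
    refine (card_le_mul_card_of_mapsTo hσ.2 (t := U.filter (· ≤ D) ∪ U ∩ Ioc D q)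
      fun j hj => ?_).trans (Nat.mul_le_mul_left _ (card_union_le _ _))
    have hjq : d j ≤ q := by
      rcases mem_union.mp hj with h | h
      · exact (hs j h).2
      · exact (hWg j h).trans (hs g hgs).2
    have := hσ.1 j
    by_cases hjD : σ j ≤ D
    · exact mem_union_left _ (mem_filter.mpr ⟨hσU j, hjD⟩)
    · exact mem_union_right _ (mem_inter.mpr ⟨hσU j, mem_Ioc.mpr ⟨by omega, by omega⟩⟩)
  have hpD : p ≤ D + 1 := by have := (hs g hgs).1; omega
  have hmul : B * (#(U.filter (· ≤ D)) + #(U ∩ Ioc D q)) ≤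
      B * (#(U.filter (· ≤ D)) - 1 + #(U ∩ Ioc D q)) + B := by
    rw [← Nat.mul_succ]
    exact Nat.mul_le_mul_left _ (by omega)
  calc #s ≤ min (B * (#(U.filter (· ≤ D)) - 1 + #(U ∩ Ioc D q))) (B * (q - D).toNat) :=
        le_min (by omega) hdead
    _ = B * min (#(U.filter (· ≤ D)) - 1 + #(U ∩ Ioc D q)) (q - D).toNat :=
        Nat.mul_min_mul_left _ _ _
    _ ≤ B * #(V ∩ Ioc D q) := Nat.mul_le_mul_left _ (hVfill q)
    _ ≤ B * #(V ∩ Icc p q) := Nat.mul_le_mul_left _ <| card_le_card <|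
        inter_subset_inter_left fun t ht => by
          rw [mem_Ioc] at ht
          exact mem_Icc.mpr ⟨by omega, ht.2⟩

theorem exists_isIntSchedule_filter_eq_of_isGreedyBatch {σ : J → ℤ}
    (hdl : ∀ t, #(univ.filter fun j => d j = t) ≤ B) (hD : IsLeast (Set.range d) D)
    (hσ : IsIntSchedule B r d σ) (hW : IsGreedyBatch B r d D W) :
    ∃ σ', IsIntSchedule B r d σ' ∧ #(univ.image σ') ≤ #(univ.image σ) ∧
      univ.filter (fun j => σ' j = D) = W := by
  set U := univ.image σ
  obtain ⟨j₀, hj₀⟩ := hD.1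
  have hUD : 1 ≤ #(U.filter (· ≤ D)) :=
    card_pos.mpr ⟨σ j₀, mem_filter.mpr ⟨mem_image_of_mem σ (mem_univ j₀), hj₀ ▸ (hσ.1 j₀).2⟩⟩
  obtain ⟨G, hGcard, hGfill⟩ :=
    exists_card_eq_min_le_card_union_inter_Ioc U D (#(U.filter (· ≤ D)) - 1)
  set V := (U ∪ G).filter (D < ·)
  have hVcard : #V + 1 ≤ #U := by
    have hsplit := card_filter_add_card_filter_not (s := U) (· ≤ D)
    have hVsub : V ⊆ U.filter (fun t => ¬t ≤ D) ∪ G := fun t ht => by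
      simp only [V, mem_filter, mem_union, not_le] at ht ⊢
      tauto
    have := (card_le_card hVsub).trans (card_union_le _ _)
    omega
  have hVfill : ∀ q, min (#(U.filter (· ≤ D)) - 1 + #(U ∩ Ioc D q)) (q - D).toNat ≤
      #(V ∩ Ioc D q) := fun q => by
    have hV : V ∩ Ioc D q = (U ∪ G) ∩ Ioc D q := by
      ext t
      simp only [V, mem_inter, mem_filter, mem_Ioc]
      tauto
    rw [hV]
    exact hGfill q
  obtain ⟨τ, hτ, hτV⟩ := exists_isIntSchedule_of_forall_Icc B
    (fun i : {j // j ∉ W} => max (r i) (D + 1)) (fun i => d i) V fun p q s hs => by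
      simpa using card_le_mul_card_inter_Icc_of_isGreedyBatch hdl hσ hW
        (fun t ht htD => mem_filter.mpr ⟨mem_union_left _ ht, htD⟩) hVfill
        (s := s.map (Function.Embedding.subtype _))
        (fun j hj => by obtain ⟨i, -, rfl⟩ := mem_map.mp hj; exact i.2) (by simpa using hs)
  refine ⟨batchAt W D τ, isIntSchedule_batchAt (fun w hw => ⟨hW.release_le w hw, hD.2 ⟨w, rfl⟩⟩)
    hW.card_le hτ, (card_image_batchAt_le hτV).trans hVcard, filter_batchAt_eq fun i => ?_⟩
  exact (mem_filter.mp (hτV i)).2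

end Schedule

theorem lazy_activation_first_slot_general
    {J : Type*} [Fintype J] [DecidableEq J]
    (B : ℕ) (r d : J → ℤ)
    (hdl : ∀ t : ℤ, (Finset.univ.filter (fun j => d j = t)).card ≤ B)
    (hfeas : ∃ σ : J → ℤ, IsIntSchedule B r d σ)
    (D : ℤ) (hD : IsLeast (Set.range d) D) :
    ∃ (σ : J → ℤ) (F : Finset J),
      IsIntSchedule B r d σ ∧
      (∀ σ' : J → ℤ, IsIntSchedule B r d σ' →
        (Finset.univ.image σ).card ≤ (Finset.univ.image σ').card) ∧
      F ⊆ Finset.univ.filter (fun j => d j ≠ D ∧ r j ≤ D) ∧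
      F.card = min (B - (Finset.univ.filter (fun j => d j = D)).card)
        ((Finset.univ.filter (fun j => d j ≠ D ∧ r j ≤ D)).card) ∧
      Finset.univ.filter (fun j => σ j = D) =
        (Finset.univ.filter (fun j => d j = D)) ∪ F ∧
      ∀ f ∈ F, ∀ g ∈ (Finset.univ.filter (fun j => d j ≠ D ∧ r j ≤ D)) \ F,
        d f ≤ d g := by
  obtain ⟨σ, hσ, hσmin⟩ := exists_isIntSchedule_forall_card_image_le hfeas
  obtain ⟨F, hFsub, hFcard, hFlow⟩ :=
    exists_subset_card_eq_forall_le_sdiff d (min_le_right (B - #(univ.filter fun j => d j = D)) _)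
  have hW := isGreedyBatch_union (fun j => (hσ.1 j).1.trans (hσ.1 j).2) hdl hD.2 hFsub hFcard hFlow
  obtain ⟨σ', hσ', hle, hslot⟩ := exists_isIntSchedule_filter_eq_of_isGreedyBatch hdl hD hσ hW
  exact ⟨σ', F, hσ', fun τ hτ => hle.trans (hσmin τ hτ), hFsub, hFcard, hslot, hFlow⟩

/-- For a feasible instance with at most `B` jobs per deadline: with `D` the
earliest deadline, `J* = {j : d j = D}` and `Favail = {j ∉ J* : r j ≤ D}`, there is
a minimum active time schedule `σ` and a set `F ⊆ Favail` of
`min (B - |J*|) |Favail|` "filler" jobs, chosen with earliest deadlines, such that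
the jobs scheduled at slot `D` are exactly `J* ∪ F`. -/
theorem lazy_activation_first_slot
    {J : Type*} [Fintype J] [DecidableEq J]
    (B : ℕ) (hB : 1 ≤ B) (r d : J → ℤ) (hrd : ∀ j, r j ≤ d j)
    (hdl : ∀ t : ℤ, (Finset.univ.filter (fun j => d j = t)).card ≤ B)
    (hfeas : ∃ σ : J → ℤ, IsIntSchedule B r d σ)
    (D : ℤ) (hD : IsLeast (Set.range d) D) :
    ∃ (σ : J → ℤ) (F : Finset J),
      IsIntSchedule B r d σ ∧
      (∀ σ' : J → ℤ, IsIntSchedule B r d σ' →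
        (Finset.univ.image σ).card ≤ (Finset.univ.image σ').card) ∧
      F ⊆ Finset.univ.filter (fun j => d j ≠ D ∧ r j ≤ D) ∧
      F.card = min (B - (Finset.univ.filter (fun j => d j = D)).card)
        ((Finset.univ.filter (fun j => d j ≠ D ∧ r j ≤ D)).card) ∧
      Finset.univ.filter (fun j => σ j = D) =
        (Finset.univ.filter (fun j => d j = D)) ∪ F ∧
      ∀ f ∈ F, ∀ g ∈ (Finset.univ.filter (fun j => d j ≠ D ∧ r j ≤ D)) \ F,
        d f ≤ d g :=
  lazy_activation_first_slot_general B r d hdl hfeas D hD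
end

section
/- Let B ≥ 1 and let J be a finite set of unit-length jobs, each job j having an integer release time r_j and an integer deadline d_j with r_j + 1 ≤ d_j. For every real schedule s : J → ℝ (satisfying r_j ≤ s_j ≤ d_j − 1 for every j, and |{j : s_j ≤ t < s_j + 1}| ≤ B for every real t), there exists a real schedule s' with s'_j ∈ ℤ for every j such that the Lebesgue measure of ⋃_j [s'_j, s'_j + 1) is at most the Lebesgue measure of ⋃_j [s_j, s_j + 1). In particular, some schedule of minimum active time starts every job at an integer time. -/
open Finset

/-- A real (continuous, nonpreemptive) schedule of unit jobs on `B` processors: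
each job `j` starts at a real time `s j ∈ [r j, d j - 1]` and executes during
`[s j, s j + 1)`, and at every instant at most `B` jobs are executing. -/
def IsRealSchedule {J : Type*} [Fintype J] (B : ℕ) (r d : J → ℤ) (s : J → ℝ) : Prop :=
  (∀ j, (r j : ℝ) ≤ s j ∧ s j ≤ (d j : ℝ) - 1) ∧
    ∀ t : ℝ, (Finset.univ.filter (fun j => s j ≤ t ∧ t < s j + 1)).card ≤ B

/-!
The busy set `⋃ j, [s j, s j + 1)` splits into blocks `[c, e)`, each a connected component.
Translate every block to the right by `⌈c⌉ - c < 1`, so that it starts at an integer, and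
then round every start down. A rounded job stays inside its translated block, since the block
is busy from `c` to the end of the job, so the active time does not grow. Release times and
deadlines survive because the shift is less than one and they are integers. Jobs rounded to
the same integer come from the same block, hence were shifted by the same amount and started
less than one unit apart; they were therefore all running at the latest of their original
start times, which bounds their number by `B`.
-/

open MeasureTheory
open scoped Pointwise

lemma measure_biUnion_vadd_le {G α ι : Type*} [AddGroup G] [AddAction G α] [MeasurableSpace α]
    (μ : Measure α) [VAddInvariantMeasure G α μ] (I : Finset ι) (U : ι → Set α) (θ : ι → G)
    (hU : (I : Set ι).PairwiseDisjoint U) (hUm : ∀ i ∈ I, MeasurableSet (U i)) :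
    μ (⋃ i ∈ I, θ i +ᵥ U i) ≤ μ (⋃ i ∈ I, U i) :=
  calc μ (⋃ i ∈ I, θ i +ᵥ U i) ≤ ∑ i ∈ I, μ (θ i +ᵥ U i) := measure_biUnion_finset_le I _
    _ = ∑ i ∈ I, μ (U i) := by simp only [measure_vadd]
    _ = μ (⋃ i ∈ I, U i) := (measure_biUnion_finset hU hUm).symm

section Blocks

variable {J : Type*} [Fintype J] (s : J → ℝ)

/-- `k` starts a block of `⋃ j, [s j, s j + 1)`: no job is running just before `s k`. -/
def IsBlockStart (k : J) : Prop := ∀ m, s m ∉ Set.Ico (s k - 1) (s k)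

noncomputable instance : DecidablePred (IsBlockStart s) := fun _ => Fintype.decidableForallFintype

lemma filter_isBlockStart_le_nonempty (j : J) :
    (univ.filter fun k => IsBlockStart s k ∧ s k ≤ s j).Nonempty := by
  obtain ⟨k, -, hk⟩ := exists_min_image univ s ⟨j, mem_univ j⟩
  exact ⟨k, mem_filter.2 ⟨mem_univ k, fun m hm => (hk m (mem_univ m)).not_gt hm.2,
    hk j (mem_univ j)⟩⟩

noncomputable def blockStart (j : J) : ℝ :=
  (univ.filter fun k => IsBlockStart s k ∧ s k ≤ s j).sup'
    (filter_isBlockStart_le_nonempty s j) s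

def blockUnion (c : ℝ) : Set ℝ := ⋃ (j) (_ : blockStart s j = c), Set.Ico (s j) (s j + 1)

lemma exists_isBlockStart_eq_blockStart (j : J) :
    ∃ k, IsBlockStart s k ∧ s k ≤ s j ∧ s k = blockStart s j := by
  obtain ⟨k, hk, he⟩ := exists_mem_eq_sup' (filter_isBlockStart_le_nonempty s j) s
  exact ⟨k, (mem_filter.1 hk).2.1, (mem_filter.1 hk).2.2, he.symm⟩

lemma blockStart_le_self (j : J) : blockStart s j ≤ s j := by
  obtain ⟨k, -, hkj, hk⟩ := exists_isBlockStart_eq_blockStart s j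
  exact hk ▸ hkj

lemma measurableSet_blockUnion (c : ℝ) : MeasurableSet (blockUnion s c) :=
  .iUnion fun _ => .iUnion fun _ => measurableSet_Ico

lemma biUnion_blockUnion_subset :
    ⋃ c ∈ univ.image (blockStart s), blockUnion s c ⊆ ⋃ j, Set.Ico (s j) (s j + 1) :=
  Set.iUnion₂_subset fun _ _ => Set.iUnion₂_subset fun j _ => Set.subset_iUnion_of_subset j le_rfl

variable {s}

lemma le_blockStart {j k : J} (hk : IsBlockStart s k) (h : s k ≤ s j) : s k ≤ blockStart s j :=
  le_sup' s (mem_filter.2 ⟨mem_univ k, hk, h⟩)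

lemma IsBlockStart.blockStart_eq {j : J} (h : IsBlockStart s j) : blockStart s j = s j :=
  (blockStart_le_self s j).antisymm (le_blockStart h le_rfl)

lemma blockStart_eq_of_mem_Ico {j k : J} (h : s k ∈ Set.Ico (s j - 1) (s j)) :
    blockStart s k = blockStart s j := by
  obtain ⟨m, hm, hmk, hmk'⟩ := exists_isBlockStart_eq_blockStart s k
  obtain ⟨n, hn, hnj, hnj'⟩ := exists_isBlockStart_eq_blockStart s j
  refine le_antisymm (hmk' ▸ le_blockStart hm (hmk.trans h.2.le)) (hnj' ▸ le_blockStart hn ?_)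
  by_contra! hlt
  exact hn k ⟨by linarith [h.1], hlt⟩

lemma add_one_le_blockStart_of_blockStart_lt {j k : J} (h : blockStart s j < blockStart s k) :
    s j + 1 ≤ blockStart s k := by
  obtain ⟨m, hm, -, hmk⟩ := exists_isBlockStart_eq_blockStart s k
  rw [← hmk] at h ⊢
  have hjm : s j < s m := lt_of_not_ge fun hmj => (le_blockStart hm hmj).not_gt h
  by_contra! hlt
  exact hm j ⟨by linarith, hjm⟩

variable (s) in
lemma Ico_blockStart_subset_blockUnion (j : J) :
    Set.Ico (blockStart s j) (s j + 1) ⊆ blockUnion s (blockStart s j) := by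
  induction j using (Finite.wellFounded_of_trans_of_irrefl (InvImage (· < ·) s)).induction with
  | _ j ih =>
    have hj : Set.Ico (s j) (s j + 1) ⊆ blockUnion s (blockStart s j) :=
      Set.subset_iUnion₂_of_subset j rfl le_rfl
    intro x hx
    by_cases hbj : IsBlockStart s j
    · exact hj ⟨hbj.blockStart_eq ▸ hx.1, hx.2⟩
    obtain ⟨k, hk⟩ : ∃ k, s k ∈ Set.Ico (s j - 1) (s j) := by simpa [IsBlockStart] using hbj
    have hkj := blockStart_eq_of_mem_Ico hk
    rcases lt_or_ge x (s k + 1) with hxk | hxk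
    · exact hkj ▸ ih k hk.2 ⟨hkj ▸ hx.1, hxk⟩
    · exact hj ⟨by linarith [hk.1], hx.2⟩

lemma disjoint_blockUnion {c c' : ℝ} (h : c ≠ c') :
    Disjoint (blockUnion s c) (blockUnion s c') := by
  wlog hlt : c < c' generalizing c c'
  · exact (this h.symm (h.lt_or_gt.resolve_left hlt)).symm
  refine Set.disjoint_left.2 fun x hx hx' => ?_
  simp only [blockUnion, Set.mem_iUnion] at hx hx'
  obtain ⟨j, rfl, hxj⟩ := hx
  obtain ⟨k, rfl, hxk⟩ := hx'
  linarith [add_one_le_blockStart_of_blockStart_lt hlt, blockStart_le_self s k, hxj.2, hxk.1]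

variable (s)

noncomputable def blockShift (j : J) : ℝ := ⌈blockStart s j⌉ - blockStart s j

noncomputable def roundedStart (j : J) : ℤ := ⌊s j + blockShift s j⌋

lemma blockShift_nonneg (j : J) : 0 ≤ blockShift s j :=
  sub_nonneg.2 (Int.le_ceil _)

lemma blockShift_lt_one (j : J) : blockShift s j < 1 :=
  sub_lt_iff_lt_add'.2 (Int.ceil_lt_add_one _)

lemma ceil_blockStart_le_roundedStart (j : J) : ⌈blockStart s j⌉ ≤ roundedStart s j :=
  Int.le_floor.2 (by rw [blockShift]; linarith [blockStart_le_self s j])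

lemma roundedStart_le (j : J) : (roundedStart s j : ℝ) ≤ s j + blockShift s j :=
  Int.floor_le _

lemma roundedStart_lt_add_one (j : J) : (roundedStart s j : ℝ) < s j + 1 := by
  linarith [roundedStart_le s j, blockShift_lt_one s j]

lemma le_roundedStart {j : J} {z : ℤ} (h : (z : ℝ) ≤ s j) : (z : ℝ) ≤ roundedStart s j :=
  Int.cast_le.2 <| Int.le_floor.2 (by linarith [blockShift_nonneg s j])

lemma roundedStart_le_sub_one {j : J} {z : ℤ} (h : s j ≤ z - 1) :
    (roundedStart s j : ℝ) ≤ z - 1 := by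
  have : roundedStart s j < z := by
    exact_mod_cast (roundedStart_lt_add_one s j).trans_le (show s j + 1 ≤ z by linarith)
  exact le_sub_iff_add_le.2 (by exact_mod_cast Int.add_one_le_of_lt this)

variable {s}

lemma roundedStart_lt_of_blockStart_lt {j k : J} (h : blockStart s j < blockStart s k) :
    roundedStart s j < roundedStart s k := by
  have : (roundedStart s j : ℝ) < ⌈blockStart s k⌉ :=
    calc (roundedStart s j : ℝ) < s j + 1 := roundedStart_lt_add_one s j
      _ ≤ blockStart s k := add_one_le_blockStart_of_blockStart_lt h
      _ ≤ ⌈blockStart s k⌉ := Int.le_ceil _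
  exact (Int.cast_lt.1 this).trans_le (ceil_blockStart_le_roundedStart s k)

lemma blockStart_eq_of_roundedStart_eq {j k : J} (h : roundedStart s j = roundedStart s k) :
    blockStart s j = blockStart s k := by
  by_contra hne
  rcases lt_or_gt_of_ne hne with hlt | hlt
  · exact (roundedStart_lt_of_blockStart_lt hlt).ne h
  · exact (roundedStart_lt_of_blockStart_lt hlt).ne' h

/-- Jobs rounded to the same integer lie in one block, hence were shifted by the same amount. -/
lemma lt_add_one_of_roundedStart_eq {j k : J} (h : roundedStart s j = roundedStart s k) :
    s j < s k + 1 := by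
  have hshift : blockShift s j = blockShift s k := by
    rw [blockShift, blockShift, blockStart_eq_of_roundedStart_eq h]
  have hj : s j + blockShift s j - 1 < roundedStart s j := Int.sub_one_lt_floor _
  have hjk : (roundedStart s j : ℝ) = roundedStart s k := by exact_mod_cast h
  linarith [roundedStart_le s k]

variable (s)

lemma Ico_roundedStart_subset_vadd_blockUnion (j : J) :
    Set.Ico (roundedStart s j : ℝ) (roundedStart s j + 1) ⊆
      blockShift s j +ᵥ blockUnion s (blockStart s j) := by
  intro x hx
  rw [Set.mem_vadd_set_iff_neg_vadd_mem, vadd_eq_add]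
  have hceil : (⌈blockStart s j⌉ : ℝ) ≤ roundedStart s j := by
    exact_mod_cast ceil_blockStart_le_roundedStart s j
  refine Ico_blockStart_subset_blockUnion s j ⟨?_, ?_⟩
  · rw [blockShift]; linarith [hx.1]
  · linarith [hx.2, roundedStart_le s j]

lemma volume_iUnion_roundedStart_le :
    volume (⋃ j, Set.Ico (roundedStart s j : ℝ) (roundedStart s j + 1)) ≤
      volume (⋃ j, Set.Ico (s j) (s j + 1)) :=
  calc volume (⋃ j, Set.Ico (roundedStart s j : ℝ) (roundedStart s j + 1))
      ≤ volume (⋃ c ∈ univ.image (blockStart s), (⌈c⌉ - c : ℝ) +ᵥ blockUnion s c) :=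
        measure_mono <| Set.iUnion_subset fun j =>
          (Ico_roundedStart_subset_vadd_blockUnion s j).trans <|
            Set.subset_biUnion_of_mem (u := fun c => (⌈c⌉ - c : ℝ) +ᵥ blockUnion s c)
              (mem_coe.2 (mem_image_of_mem _ (mem_univ j)))
    _ ≤ volume (⋃ c ∈ univ.image (blockStart s), blockUnion s c) :=
        measure_biUnion_vadd_le volume _ _ _ (fun _ _ _ _ h => disjoint_blockUnion h)
          fun c _ => measurableSet_blockUnion s c
    _ ≤ volume (⋃ j, Set.Ico (s j) (s j + 1)) := measure_mono (biUnion_blockUnion_subset s)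

variable {s}

lemma card_filter_roundedStart_le {B : ℕ}
    (hB : ∀ t : ℝ, #(univ.filter fun j => s j ≤ t ∧ t < s j + 1) ≤ B) (t : ℝ) :
    #(univ.filter fun j => (roundedStart s j : ℝ) ≤ t ∧ t < roundedStart s j + 1) ≤ B := by
  set E := univ.filter fun j => (roundedStart s j : ℝ) ≤ t ∧ t < roundedStart s j + 1
  rcases E.eq_empty_or_nonempty with hE | hE
  · simp [hE]
  obtain ⟨j, hj, hjmax⟩ := exists_max_image E s hE
  have hfloor : ∀ k ∈ E, roundedStart s k = ⌊t⌋ := fun k hk =>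
    (Int.floor_eq_iff.2 (by exact_mod_cast (mem_filter.1 hk).2)).symm
  have hrunning : E ⊆ univ.filter fun k => s k ≤ s j ∧ s j < s k + 1 := fun k hk =>
    mem_filter.2 ⟨mem_univ k, hjmax k hk,
      lt_add_one_of_roundedStart_eq ((hfloor j hj).trans (hfloor k hk).symm)⟩
  exact (card_le_card hrunning).trans (hB (s j))

end Blocks

lemma isRealSchedule_roundedStart {J : Type*} [Fintype J] {B : ℕ} {r d : J → ℤ} {s : J → ℝ}
    (hs : IsRealSchedule B r d s) : IsRealSchedule B r d fun j => (roundedStart s j : ℝ) :=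
  ⟨fun j => ⟨le_roundedStart s (hs.1 j).1, roundedStart_le_sub_one s (hs.1 j).2⟩,
    card_filter_roundedStart_le hs.2⟩

theorem integral_start_times_wlog_general
    {J : Type*} [Fintype J] (B : ℕ) (r d : J → ℤ)
    (s : J → ℝ) (hs : IsRealSchedule B r d s) :
    ∃ s' : J → ℝ, IsRealSchedule B r d s' ∧ (∀ j, ∃ z : ℤ, s' j = (z : ℝ)) ∧
      MeasureTheory.volume (⋃ j, Set.Ico (s' j) (s' j + 1)) ≤
        MeasureTheory.volume (⋃ j, Set.Ico (s j) (s j + 1)) :=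
  ⟨fun j => roundedStart s j, isRealSchedule_roundedStart hs, fun _ => ⟨_, rfl⟩,
    volume_iUnion_roundedStart_le s⟩

/-- For any real schedule there is a real schedule with integer start times whose
active time (the Lebesgue measure of the union of execution intervals) is no
larger. Hence some minimum active time schedule starts every job at an integer. -/
theorem integral_start_times_wlog
    {J : Type*} [Fintype J] (B : ℕ) (hB : 1 ≤ B) (r d : J → ℤ)
    (hrd : ∀ j, r j + 1 ≤ d j)
    (s : J → ℝ) (hs : IsRealSchedule B r d s) :
    ∃ s' : J → ℝ, IsRealSchedule B r d s' ∧ (∀ j, ∃ z : ℤ, s' j = (z : ℝ)) ∧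
      MeasureTheory.volume (⋃ j, Set.Ico (s' j) (s' j + 1)) ≤
        MeasureTheory.volume (⋃ j, Set.Ico (s j) (s j + 1)) :=
  integral_start_times_wlog_general B r d s hs
end

section
/- Let G be a finite simple graph with no isolated vertices, and let ν(G) denote the maximum cardinality of a matching in G. Consider the unit-job multi-slot instance with B = 2 whose jobs are the vertices of G, whose time slots are the edges of G, and where the feasible slots of a vertex v are the edges incident to v. Then the minimum active time over all schedules of the full job set V(G) equals |V(G)| − ν(G). -/
/-!
Call a slot *full* if it holds two jobs. In a schedule of the vertices into incident edges,
a full edge holds exactly its two endpoints, so the full edges form a matching, and counting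
jobs slot by slot gives `|V| = #active + #full ≤ #active + ν`. Conversely, schedule every
vertex covered by a maximum matching `M` on its `M`-edge and every other vertex on any
incident edge: by maximality no two uncovered vertices share an edge, so the full edges are
exactly those of `M` and the active time is `|V| - ν`.
-/

open Finset

section Slots

variable {α β : Type*} [Fintype α] [DecidableEq β]

def fullSlots (f : α → β) : Finset β :=
  {b ∈ univ.image f | #{a | f a = b} = 2}

theorem card_eq_card_image_add_card_fullSlots (f : α → β) (hf : ∀ b, #{a | f a = b} ≤ 2) :
    Fintype.card α = #(univ.image f) + #(fullSlots f) := by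
  have hfiber : ∀ b ∈ univ.image f, #{a | f a = b} = 1 + if #{a | f a = b} = 2 then 1 else 0 := by
    intro b hb
    obtain ⟨a, -, rfl⟩ := mem_image.mp hb
    have hpos : 0 < #{a' | f a' = f a} := card_pos.mpr ⟨a, by simp⟩
    have := hf (f a)
    split_ifs <;> omega
  rw [← card_univ, card_eq_sum_card_image f univ, sum_congr rfl hfiber, sum_add_distrib,
    ← card_eq_sum_ones, fullSlots, card_filter]

theorem exists_ne_of_mem_fullSlots {f : α → β} {b : β} (hb : b ∈ fullSlots f) :
    ∃ a a', a ≠ a' ∧ f a = b ∧ f a' = b := by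
  obtain ⟨a, ha, a', ha', hne⟩ := one_lt_card.mp (by rw [(mem_filter.mp hb).2]; omega)
  exact ⟨a, a', hne, (mem_filter.mp ha).2, (mem_filter.mp ha').2⟩

end Slots

section Matching

variable {V : Type*} [Fintype V] [DecidableEq V] (G : SimpleGraph V) [DecidableRel G.Adj]

def IsEdgeMatching (M : Finset (Sym2 V)) : Prop :=
  M ⊆ G.edgeFinset ∧ ∀ e ∈ M, ∀ f ∈ M, e ≠ f → ∀ v : V, ¬(v ∈ e ∧ v ∈ f)

def IsSchedule (σ : V → Sym2 V) : Prop :=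
  (∀ v : V, σ v ∈ G.edgeFinset ∧ v ∈ σ v) ∧ ∀ e : Sym2 V, #{v | σ v = e} ≤ 2

variable {G}

theorem IsEdgeMatching.eq_of_mem {M : Finset (Sym2 V)} (hM : IsEdgeMatching G M)
    {e f : Sym2 V} (he : e ∈ M) (hf : f ∈ M) {v : V} (hve : v ∈ e) (hvf : v ∈ f) : e = f := by
  by_contra hne
  exact hM.2 e he f hf hne v ⟨hve, hvf⟩

theorem IsEdgeMatching.insert {M : Finset (Sym2 V)} (hM : IsEdgeMatching G M) {u v : V}
    (huv : G.Adj u v) (hu : ∀ f ∈ M, u ∉ f) (hv : ∀ f ∈ M, v ∉ f) :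
    IsEdgeMatching G (insert s(u, v) M) := by
  have hfree : ∀ f ∈ M, ∀ w ∈ s(u, v), w ∉ f := by
    intro f hf w hw
    rcases Sym2.mem_iff.mp hw with rfl | rfl
    exacts [hu f hf, hv f hf]
  refine ⟨insert_subset (G.mem_edgeFinset.mpr huv) hM.1, ?_⟩
  simp only [mem_insert]
  rintro e (rfl | he) f (rfl | hf) hef w ⟨hwe, hwf⟩
  · exact hef rfl
  · exact hfree f hf w hwe hwf
  · exact hfree e he w hwf hwe
  · exact hM.2 e he f hf hef w ⟨hwe, hwf⟩

theorem IsEdgeMatching.exists_mem_of_adj {M : Finset (Sym2 V)} (hM : IsEdgeMatching G M)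
    (hmax : ∀ M', IsEdgeMatching G M' → #M' ≤ #M) {u v : V} (huv : G.Adj u v) :
    (∃ f ∈ M, u ∈ f) ∨ ∃ f ∈ M, v ∈ f := by
  by_contra! h
  have hnotMem : s(u, v) ∉ M := fun hM' => h.1 _ hM' (Sym2.mem_mk_left u v)
  have := hmax _ (hM.insert huv h.1 h.2)
  rw [card_insert_of_notMem hnotMem] at this
  omega

theorem card_filter_eq_le_two_of_forall_mem_self {σ : V → Sym2 V} (hσ : ∀ v, v ∈ σ v)
    (e : Sym2 V) : #{v | σ v = e} ≤ 2 := by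
  calc #{v | σ v = e} ≤ #e.toFinset :=
        card_le_card fun v hv => Sym2.mem_toFinset.mpr ((mem_filter.mp hv).2 ▸ hσ v)
    _ ≤ 2 := by rw [Sym2.card_toFinset]; split_ifs <;> omega

theorem eq_of_mem_fullSlots {σ : V → Sym2 V} (hσ : ∀ v, v ∈ σ v) {e : Sym2 V}
    (he : e ∈ fullSlots σ) {v : V} (hv : v ∈ e) : σ v = e := by
  obtain ⟨a, b, hab, ha, hb⟩ := exists_ne_of_mem_fullSlots he
  have hab_e : e = s(a, b) := (Sym2.mem_and_mem_iff hab).mp ⟨ha ▸ hσ a, hb ▸ hσ b⟩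
  rcases Sym2.mem_iff.mp (hab_e ▸ hv) with rfl | rfl
  exacts [ha, hb]

theorem IsSchedule.isEdgeMatching_fullSlots {σ : V → Sym2 V} (hσ : IsSchedule G σ) :
    IsEdgeMatching G (fullSlots σ) := by
  refine ⟨fun e he => ?_, fun e he f hf hef v hv => ?_⟩
  · obtain ⟨w, -, rfl⟩ := mem_image.mp (mem_filter.mp he).1
    exact (hσ.1 w).1
  · exact hef ((eq_of_mem_fullSlots (fun w => (hσ.1 w).2) he hv.1).symm.trans
      (eq_of_mem_fullSlots (fun w => (hσ.1 w).2) hf hv.2))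

theorem IsSchedule.card_add_card_fullSlots {σ : V → Sym2 V} (hσ : IsSchedule G σ) :
    #(univ.image σ) + #(fullSlots σ) = Fintype.card V :=
  (card_eq_card_image_add_card_fullSlots σ hσ.2).symm

theorem fullSlots_eq_of_maximal {M : Finset (Sym2 V)} (hM : IsEdgeMatching G M)
    (hmax : ∀ u v, G.Adj u v → (∃ f ∈ M, u ∈ f) ∨ ∃ f ∈ M, v ∈ f) {σ : V → Sym2 V}
    (hσG : ∀ v, σ v ∈ G.edgeFinset) (hσ : ∀ v, v ∈ σ v)
    (hσM : ∀ v, (∃ f ∈ M, v ∈ f) → σ v ∈ M) : fullSlots σ = M := by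
  have hσ_of_mem : ∀ e ∈ M, ∀ v ∈ e, σ v = e := fun e he v hv =>
    hM.eq_of_mem (hσM v ⟨e, he, hv⟩) he (hσ v) hv
  ext e
  constructor
  · intro he
    obtain ⟨a, b, hab, ha, hb⟩ := exists_ne_of_mem_fullSlots he
    have hab_e : e = s(a, b) := (Sym2.mem_and_mem_iff hab).mp ⟨ha ▸ hσ a, hb ▸ hσ b⟩
    have hadj : G.Adj a b := by simpa [ha, hab_e] using hσG a
    rcases hmax a b hadj with hcov | hcov
    exacts [ha ▸ hσM a hcov, hb ▸ hσM b hcov]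
  · intro he
    induction e using Sym2.ind with
    | _ a b =>
      have hab : a ≠ b := (G.mem_edgeFinset.mp (hM.1 he)).ne
      have hfiber : ({v | σ v = s(a, b)} : Finset V) = {a, b} := by
        ext v
        simp only [mem_filter, mem_univ, true_and, mem_insert, mem_singleton]
        refine ⟨fun hv => Sym2.mem_iff.mp (hv ▸ hσ v), ?_⟩
        rintro (rfl | rfl)
        exacts [hσ_of_mem _ he _ (Sym2.mem_mk_left _ _),
          hσ_of_mem _ he _ (Sym2.mem_mk_right _ _)]
      refine mem_filter.mpr ⟨?_, by rw [hfiber, card_pair hab]⟩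
      exact mem_image.mpr ⟨a, mem_univ a, hσ_of_mem _ he _ (Sym2.mem_mk_left _ _)⟩

theorem exists_isSchedule_fullSlots_eq (hiso : ∀ v : V, ∃ w : V, G.Adj v w)
    {M : Finset (Sym2 V)} (hM : IsEdgeMatching G M)
    (hmax : ∀ u v, G.Adj u v → (∃ f ∈ M, u ∈ f) ∨ ∃ f ∈ M, v ∈ f) :
    ∃ σ, IsSchedule G σ ∧ fullSlots σ = M := by
  have hslot : ∀ v : V, ∃ e ∈ G.edgeFinset, v ∈ e ∧ ((∃ f ∈ M, v ∈ f) → e ∈ M) := by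
    intro v
    by_cases hcov : ∃ f ∈ M, v ∈ f
    · obtain ⟨f, hf, hvf⟩ := hcov
      exact ⟨f, hM.1 hf, hvf, fun _ => hf⟩
    · obtain ⟨w, hvw⟩ := hiso v
      exact ⟨s(v, w), G.mem_edgeFinset.mpr hvw, Sym2.mem_mk_left v w, fun h => (hcov h).elim⟩
  choose σ hσG hσ hσM using hslot
  exact ⟨σ, ⟨fun v => ⟨hσG v, hσ v⟩, card_filter_eq_le_two_of_forall_mem_self hσ⟩,
    fullSlots_eq_of_maximal hM hmax hσG hσ hσM⟩

end Matching

/-- Scheduling the vertices of a graph `G` (unit jobs) into its edges (time slots),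
where a vertex may be scheduled only in an incident edge and each edge holds at
most two vertices: the minimum number of active edges equals `|V| - ν(G)`, where
`ν(G)` is the maximum cardinality of a matching of `G`. -/
theorem min_active_time_eq_card_sub_matching_number
    {V : Type*} [Fintype V] [DecidableEq V]
    (G : SimpleGraph V) [DecidableRel G.Adj]
    (hiso : ∀ v : V, ∃ w : V, G.Adj v w)
    (ν : ℕ)
    (hν : IsGreatest {n : ℕ | ∃ M : Finset (Sym2 V), M ⊆ G.edgeFinset ∧
        (∀ e ∈ M, ∀ f ∈ M, e ≠ f → ∀ v : V, ¬(v ∈ e ∧ v ∈ f)) ∧ M.card = n} ν) :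
    IsLeast {n : ℕ | ∃ σ : V → Sym2 V,
        (∀ v : V, σ v ∈ G.edgeFinset ∧ v ∈ σ v) ∧
        (∀ e : Sym2 V, (Finset.univ.filter (fun v => σ v = e)).card ≤ 2) ∧
        (Finset.univ.image σ).card = n}
      (Fintype.card V - ν) := by
  have hle : ∀ M, IsEdgeMatching G M → #M ≤ ν := fun M hM => hν.2 ⟨M, hM.1, hM.2, rfl⟩
  obtain ⟨M, hMG, hMdisj, rfl⟩ := hν.1
  have hM : IsEdgeMatching G M := ⟨hMG, hMdisj⟩
  constructor
  · obtain ⟨σ, hσ, hfull⟩ :=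
      exists_isSchedule_fullSlots_eq hiso hM fun _ _ huv => hM.exists_mem_of_adj hle huv
    refine ⟨σ, hσ.1, hσ.2, ?_⟩
    have := hσ.card_add_card_fullSlots
    rw [hfull] at this
    omega
  · rintro n ⟨σ, hσG, hσload, rfl⟩
    have hσ : IsSchedule G σ := ⟨hσG, hσload⟩
    have := hσ.card_add_card_fullSlots
    have := hle _ hσ.isEdgeMatching_fullSlots
    omega
end

section
/- Consider the instance with B = 2 consisting of three unit-length jobs, two time slots, and every slot feasible for every job. Then the minimum active time over all integral schedules equals 2, while the minimum fractional active time over all fractional (preemptive) schedules equals 3/2. Hence the ratio 4/3 between integral and fractional optimal active time is attained. -/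
/-! Both bounds count load: three units of work must fit into slots of capacity `B = 2` per unit of
active time, so the active time is at least `3/2`, and at least `2` when it is an integer.
Two jobs in one slot and one in the other attains `2`; running every job half in each slot,
with both slots open to the extent `3/4`, attains `3/2`. -/

open Finset

/-- An integral schedule: each job `j` is assigned a set `A j ⊆ T j` of slots
with `(A j).card = len j`, and every slot is used by at most `B` jobs. -/
def IsIntegralSchedule {J S : Type*} [Fintype J] [DecidableEq S]
    (B : ℕ) (T : J → Finset S) (len : J → ℕ) (A : J → Finset S) : Prop :=
  (∀ j, A j ⊆ T j) ∧ (∀ j, (A j).card = len j) ∧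
    ∀ s : S, (Finset.univ.filter (fun j => s ∈ A j)).card ≤ B

/-- The active time of an integral schedule: the number of slots used by some job. -/
def activeTime {J S : Type*} [Fintype J] [DecidableEq S] (A : J → Finset S) : ℕ :=
  (Finset.univ.biUnion A).card

section LoadBounds

variable {J S : Type*} [Fintype J] {B : ℕ} {T : J → Finset S} {len : J → ℕ}

theorem IsIntegralSchedule.sum_len_le_mul_activeTime [DecidableEq S] {A : J → Finset S}
    (hA : IsIntegralSchedule B T len A) : ∑ j, len j ≤ B * activeTime A := by
  obtain ⟨-, hcard, hcap⟩ := hA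
  set U := univ.biUnion A
  have hsub : ∀ j, A j ⊆ U := fun j => subset_biUnion_of_mem A (mem_univ j)
  have hfib : ∀ j, U.bipartiteAbove (fun j s => s ∈ A j) j = A j := fun j => by
    rw [bipartiteAbove, filter_mem_eq_inter, inter_eq_right.mpr (hsub j)]
  calc ∑ j, len j = ∑ j, #(U.bipartiteAbove (fun j s => s ∈ A j) j) := by
        simp only [hfib, hcard]
    _ = ∑ s ∈ U, #(univ.bipartiteBelow (fun j s => s ∈ A j) s) :=
        sum_card_bipartiteAbove_eq_sum_card_bipartiteBelow _
    _ ≤ ∑ _s ∈ U, B := sum_le_sum fun s _ => hcap s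
    _ = B * activeTime A := by rw [sum_const, smul_eq_mul, mul_comm]; rfl

theorem IsFracSchedule.sum_len_le_mul_sum [Fintype S] {x : J → S → ℝ} {a : S → ℝ}
    (h : IsFracSchedule B T len x a) : (∑ j, len j : ℝ) ≤ B * ∑ s, a s := by
  obtain ⟨-, -, -, hlen, -, hcap⟩ := h
  calc (∑ j, len j : ℝ) = ∑ j, ∑ s, x j s := by simp only [hlen]
    _ = ∑ s, ∑ j, x j s := sum_comm
    _ ≤ ∑ s, B * a s := sum_le_sum fun s _ => hcap s
    _ = B * ∑ s, a s := (mul_sum ..).symm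

end LoadBounds

/-- For the instance with `B = 2`, three unit jobs, two slots, and every slot
feasible for every job: the minimum integral active time is `2` while the minimum
fractional active time is `3/2`, attaining the ratio `4/3`. -/
theorem tight_example_ratio_four_thirds :
    IsLeast {n : ℕ | ∃ A : Fin 3 → Finset (Fin 2),
        IsIntegralSchedule 2 (fun _ : Fin 3 => (Finset.univ : Finset (Fin 2)))
          (fun _ => 1) A ∧ activeTime A = n} 2 ∧
    IsLeast {c : ℝ | ∃ (x : Fin 3 → Fin 2 → ℝ) (a : Fin 2 → ℝ),
        IsFracSchedule 2 (fun _ : Fin 3 => (Finset.univ : Finset (Fin 2)))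
          (fun _ => 1) x a ∧ ∑ s, a s = c} (3 / 2) := by
  refine ⟨⟨?_, ?_⟩, ⟨?_, ?_⟩⟩
  · refine ⟨fun j => {if j = 0 then 0 else 1}, ?_, by decide⟩
    unfold IsIntegralSchedule
    decide
  · rintro n ⟨A, hA, rfl⟩
    have := hA.sum_len_le_mul_activeTime
    simp only [sum_const, card_univ, Fintype.card_fin, smul_eq_mul, mul_one] at this
    omega
  · refine ⟨fun _ _ => 1 / 2, fun _ => 3 / 4, ?_, by norm_num⟩
    refine ⟨fun _ _ => by norm_num, fun _ => by norm_num, fun _ s hs => absurd (mem_univ s) hs,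
      fun _ => by norm_num, fun _ _ => by norm_num, fun _ => by norm_num⟩
  · rintro c ⟨x, a, hxa, rfl⟩
    have := hxa.sum_len_le_mul_sum
    norm_num at this
    rw [Fin.sum_univ_two]
    linarith
end

section
/- Let B be a positive integer, L > 0 a real number, and x_1, …, x_n nonnegative reals with x_j ≤ L for every j and ∑_{j=1}^n x_j ≤ B·L. Then there exist sets A_1, …, A_n ⊆ [0, L), each a finite union of half-open intervals, such that the Lebesgue measure of A_j equals x_j for every j, and for every t ∈ [0, L) at most B of the sets A_j contain t. (This shows the per-slot constraints ∑_j x_{j,s} ≤ B(1 − i_s) and x_{j,s} + i_s ≤ 1 are sufficient for preemptively executing x_{j,s} units of each job j within 1 − i_s units of time on B processors, with no job running on two processors simultaneously.) -/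
/-!
McNaughton's wrap-around rule. Lay the jobs end to end on the line, job `j` occupying
`[S j, S (j + 1))` where `S` is the sequence of partial sums of `x`; this fills part of
`[0, B L)`. Cut that segment into `B` pieces of length `L` and stack them: job `j` runs at the
times `t ∈ [0, L)` having a lift `t + m L` in its interval. Since `x j ≤ L`, these times form an
interval wrapped around `[0, L)`, i.e. at most two intervals of total length `x j`. A time `t`
has only the `B` lifts `t, t + L, …, t + (B - 1) L` in `[0, B L)`, and each lies in the interval
of at most one job.
-/

open Set MeasureTheory

namespace Fin

variable {M : Type*} [AddCommMonoid M] {n : ℕ}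

theorem partialSum_last (f : Fin n → M) : partialSum f (last n) = ∑ i, f i := by
  rw [partialSum, val_last, List.take_of_length_le (by simp), List.sum_ofFn]

theorem monotone_partialSum [PartialOrder M] [IsOrderedAddMonoid M] {f : Fin n → M}
    (hf : ∀ i, 0 ≤ f i) : Monotone (partialSum f) :=
  monotone_iff_le_succ.2 fun i => by
    rw [partialSum_succ]
    exact le_add_of_nonneg_right (hf i)

end Fin

theorem Monotone.eq_of_mem_Ico_castSucc_succ {α : Type*} [Preorder α] {n : ℕ}
    {S : Fin (n + 1) → α} (hS : Monotone S) {i j : Fin n} {s : α}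
    (hi : s ∈ Ico (S i.castSucc) (S i.succ)) (hj : s ∈ Ico (S j.castSucc) (S j.succ)) :
    i = j := by
  have key : ∀ {i j : Fin n}, s ∈ Ico (S i.castSucc) (S i.succ) →
      s ∈ Ico (S j.castSucc) (S j.succ) → ¬ i < j := fun hi hj hij =>
    (hi.2.trans_le (hS (Fin.succ_le_castSucc_iff.2 hij))).not_ge hj.1
  exact le_antisymm (not_lt.1 (key hj hi)) (not_lt.1 (key hi hj))

/-- The image of `[a, b)` in `[0, L)` under reduction modulo `L`, provided `b - a ≤ L`. -/
def wrapIco (L a b : ℝ) : Set ℝ :=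
  Ico (a - ⌊a / L⌋ * L) (min (b - ⌊a / L⌋ * L) L) ∪ Ico 0 (b - (⌊a / L⌋ + 1) * L)

section wrapIco

variable {L a b t : ℝ}

theorem wrapIco_eq_biUnion (L a b : ℝ) :
    ∃ I : Finset (ℝ × ℝ), wrapIco L a b = ⋃ p ∈ I, Ico p.1 p.2 :=
  ⟨{(a - ⌊a / L⌋ * L, min (b - ⌊a / L⌋ * L) L), (0, b - (⌊a / L⌋ + 1) * L)}, by
    rw [Finset.set_biUnion_insert, Finset.set_biUnion_singleton, wrapIco]⟩

theorem wrapIco_subset_Ico (hL : 0 < L) (hba : b ≤ a + L) : wrapIco L a b ⊆ Ico 0 L := by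
  have h0 := Int.sub_floor_div_mul_nonneg a hL
  have hr := Int.sub_floor_div_mul_lt a hL
  refine union_subset (Ico_subset_Ico h0 (min_le_right _ _)) (Ico_subset_Ico le_rfl ?_)
  linarith

theorem volume_wrapIco (hL : 0 < L) (hba : b ≤ a + L) :
    volume (wrapIco L a b) = ENNReal.ofReal (b - a) := by
  set r := a - ⌊a / L⌋ * L
  have hr : r < L := Int.sub_floor_div_mul_lt a hL
  have hdisj : Disjoint (Ico r (min (b - ⌊a / L⌋ * L) L)) (Ico 0 (b - (⌊a / L⌋ + 1) * L)) :=
    disjoint_left.2 fun s hs₁ hs₂ => by linarith [hs₁.1, hs₂.2]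
  rw [wrapIco, measure_union hdisj measurableSet_Ico, Real.volume_Ico, Real.volume_Ico]
  rcases le_or_gt (b - ⌊a / L⌋ * L) L with hfit | hwrap
  · rw [min_eq_left hfit, ENNReal.ofReal_of_nonpos (p := b - (⌊a / L⌋ + 1) * L - 0) (by linarith),
      add_zero]
    congr 1
    ring
  · rw [min_eq_right hwrap.le, ← ENNReal.ofReal_add (by linarith) (by linarith)]
    congr 1
    ring

theorem exists_add_mul_mem_of_mem_wrapIco (hL : 0 < L) (ht : t ∈ wrapIco L a b) :
    ∃ m : ℤ, t + m * L ∈ Ico a b := by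
  rcases ht with ⟨ht₁, ht₂⟩ | ⟨ht₁, ht₂⟩
  · exact ⟨⌊a / L⌋, by linarith, by linarith [(lt_min_iff.1 ht₂).1]⟩
  · have ha : a < (⌊a / L⌋ + 1) * L := by
      linarith [Int.sub_floor_div_mul_lt a hL]
    exact ⟨⌊a / L⌋ + 1, by push_cast; linarith, by push_cast; linarith⟩

theorem exists_lt_add_mul_mem_of_mem_wrapIco {B : ℕ} (hL : 0 < L) (ha : 0 ≤ a)
    (hb : b ≤ B * L) (ht : t ∈ Ico 0 L) (h : t ∈ wrapIco L a b) :
    ∃ m : ℕ, m < B ∧ t + m * L ∈ Ico a b := by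
  obtain ⟨m, hm⟩ := exists_add_mul_mem_of_mem_wrapIco hL h
  have hm0 : 0 ≤ m := by
    by_contra! hneg
    have : (m : ℝ) ≤ -1 := by exact_mod_cast Int.le_sub_one_of_lt hneg
    nlinarith [ht.2, hm.1]
  lift m to ℕ using hm0
  push_cast at hm
  refine ⟨m, ?_, hm⟩
  have : (m : ℝ) * L < B * L := by linarith [ht.1, hm.2]
  exact_mod_cast lt_of_mul_lt_mul_right this hL.le

end wrapIco

theorem card_mem_wrapIco_le {n B : ℕ} {L t : ℝ} {S : Fin (n + 1) → ℝ} (hL : 0 < L)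
    (hS : Monotone S) (hS0 : 0 ≤ S 0) (hSB : S (Fin.last n) ≤ B * L) (ht : t ∈ Ico 0 L) :
    Nat.card {j : Fin n // t ∈ wrapIco L (S j.castSucc) (S j.succ)} ≤ B := by
  have hlift : ∀ j : {j : Fin n // t ∈ wrapIco L (S j.castSucc) (S j.succ)},
      ∃ m : Fin B, t + m * L ∈ Ico (S j.1.castSucc) (S j.1.succ) := fun j => by
    obtain ⟨m, hmB, hm⟩ := exists_lt_add_mul_mem_of_mem_wrapIco hL
      (hS0.trans (hS (Fin.zero_le _))) ((hS (Fin.le_last _)).trans hSB) ht j.2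
    exact ⟨⟨m, hmB⟩, hm⟩
  choose g hg using hlift
  have hg_inj : g.Injective := fun i j hij =>
    Subtype.ext (hS.eq_of_mem_Ico_castSucc_succ (hg i) (hij ▸ hg j))
  simpa using Nat.card_le_card_of_injective g hg_inj

theorem mcnaughton_wraparound_sufficiency_general
    (B : ℕ) (L : ℝ) (hL : 0 < L) (n : ℕ)
    (x : Fin n → ℝ) (hx0 : ∀ j, 0 ≤ x j) (hxL : ∀ j, x j ≤ L)
    (hsum : ∑ j, x j ≤ (B : ℝ) * L) :
    ∃ A : Fin n → Set ℝ,
      (∀ j, A j ⊆ Set.Ico (0 : ℝ) L) ∧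
      (∀ j, ∃ I : Finset (ℝ × ℝ), A j = ⋃ p ∈ I, Set.Ico p.1 p.2) ∧
      (∀ j, MeasureTheory.volume (A j) = ENNReal.ofReal (x j)) ∧
      ∀ t ∈ Set.Ico (0 : ℝ) L, Nat.card {j : Fin n // t ∈ A j} ≤ B := by
  set S := Fin.partialSum x
  have hS : Monotone S := Fin.monotone_partialSum hx0
  have hlen (j : Fin n) : S j.succ = S j.castSucc + x j := Fin.partialSum_succ x j
  refine ⟨fun j => wrapIco L (S j.castSucc) (S j.succ), fun j => ?_,
    fun j => wrapIco_eq_biUnion _ _ _, fun j => ?_, fun t ht => ?_⟩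
  · exact wrapIco_subset_Ico hL (by linarith [hlen j, hxL j])
  · rw [volume_wrapIco hL (by linarith [hlen j, hxL j]), hlen j, add_sub_cancel_left]
  · exact card_mem_wrapIco_le hL hS (by simp [S]) ((Fin.partialSum_last x).trans_le hsum) ht

/-- Amounts `x j ≤ L` of `n` jobs with total at most `B * L` can be preemptively
executed within the window `[0, L)` on `B` processors: there are sets
`A j ⊆ [0, L)`, each a finite union of half-open intervals, with Lebesgue measure
`x j`, such that at every instant at most `B` jobs are executing. -/
theorem mcnaughton_wraparound_sufficiency
    (B : ℕ) (hB : 0 < B) (L : ℝ) (hL : 0 < L) (n : ℕ)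
    (x : Fin n → ℝ) (hx0 : ∀ j, 0 ≤ x j) (hxL : ∀ j, x j ≤ L)
    (hsum : ∑ j, x j ≤ (B : ℝ) * L) :
    ∃ A : Fin n → Set ℝ,
      (∀ j, A j ⊆ Set.Ico (0 : ℝ) L) ∧
      (∀ j, ∃ I : Finset (ℝ × ℝ), A j = ⋃ p ∈ I, Set.Ico p.1 p.2) ∧
      (∀ j, MeasureTheory.volume (A j) = ENNReal.ofReal (x j)) ∧
      ∀ t ∈ Set.Ico (0 : ℝ) L, Nat.card {j : Fin n // t ∈ A j} ≤ B :=
  mcnaughton_wraparound_sufficiency_general B L hL n x hx0 hxL hsum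
end

section
/- Let X be a finite set with |X| = 3q, and let S_1, …, S_m be subsets of X each of cardinality exactly 3. Consider the unit-job multi-slot instance with B = 3 whose jobs are the elements of X, whose time slots are the indices {1, …, m}, and where the feasible slots of element x are {i : x ∈ S_i}. Then there exists a subset A ⊆ {1, …, m} with |A| = q such that the sets {S_i : i ∈ A} are pairwise disjoint and cover X (an exact cover) if and only if there exists a schedule of the full job set X whose active time is at most q. -/
/-!
A schedule with active time `q` of `3q` jobs in slots of capacity `3` must fill each of its `q`
active slots completely. Each slot `i` only holds elements of the `3`-element set `S i`, so a full
slot holds exactly `S i`; the active slots therefore index `q` sets that partition `X`. Conversely,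
assigning each element to the set of an exact cover containing it is such a schedule.
-/

open Finset

section Fibers

variable {α ι : Type*} [Fintype α] [DecidableEq ι] (σ : α → ι)

theorem filter_eq_subset_of_forall_mem {S : ι → Finset α} (hσ : ∀ x, x ∈ S (σ x)) (i : ι) :
    ({x | σ x = i} : Finset α) ⊆ S i := by
  intro x hx
  rw [(mem_filter.mp hx).2.symm]
  exact hσ x

theorem card_image_eq_of_card_fiber_le {b q : ℕ} (hb : 0 < b) (hcard : Fintype.card α = b * q)
    (hfib : ∀ i, #{x | σ x = i} ≤ b) (him : #(univ.image σ) ≤ q) :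
    #(univ.image σ) = q := by
  refine le_antisymm him (Nat.le_of_mul_le_mul_left ?_ hb)
  rw [← hcard, ← card_univ]
  exact card_le_mul_card_image _ b fun i _ => hfib i

theorem card_fiber_eq_of_card_fiber_le {b : ℕ} (hcard : Fintype.card α = b * #(univ.image σ))
    (hfib : ∀ i, #{x | σ x = i} ≤ b) :
    ∀ i ∈ univ.image σ, #{x | σ x = i} = b := by
  refine (sum_eq_sum_iff_of_le fun i _ => hfib i).mp ?_
  rw [← card_eq_sum_card_image, card_univ, hcard, sum_const, smul_eq_mul, mul_comm]

end Fibers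

section ExactCover

variable {α ι : Type*} [Fintype α] [DecidableEq ι] {S : ι → Finset α} {b : ℕ}

theorem exists_schedule_of_cover (hS : ∀ i, #(S i) ≤ b) {A : Finset ι}
    (hcov : ∀ x, ∃ i ∈ A, x ∈ S i) :
    ∃ σ : α → ι, (∀ x, x ∈ S (σ x)) ∧ (∀ i, #{x | σ x = i} ≤ b) ∧ #(univ.image σ) ≤ #A := by
  choose σ hσA hσS using hcov
  refine ⟨σ, hσS, fun i => (card_le_card (filter_eq_subset_of_forall_mem σ hσS i)).trans (hS i),
    card_le_card fun i hi => ?_⟩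
  obtain ⟨x, -, rfl⟩ := mem_image.mp hi
  exact hσA x

theorem exists_exactCover_of_schedule (hb : 0 < b) {q : ℕ} (hcard : Fintype.card α = b * q)
    (hS : ∀ i, #(S i) = b) {σ : α → ι} (hσ : ∀ x, x ∈ S (σ x))
    (hfib : ∀ i, #{x | σ x = i} ≤ b) (him : #(univ.image σ) ≤ q) :
    ∃ A : Finset ι, #A = q ∧ (∀ i ∈ A, ∀ j ∈ A, i ≠ j → Disjoint (S i) (S j)) ∧
      ∀ x, ∃ i ∈ A, x ∈ S i := by
  have hA : #(univ.image σ) = q := card_image_eq_of_card_fiber_le σ hb hcard hfib him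
  have hfull := card_fiber_eq_of_card_fiber_le σ (hA ▸ hcard) hfib
  have hfiber_eq : ∀ i ∈ univ.image σ, ({x | σ x = i} : Finset α) = S i := fun i hi =>
    eq_of_subset_of_card_le (filter_eq_subset_of_forall_mem σ hσ i) (hS i ▸ (hfull i hi).ge)
  refine ⟨univ.image σ, hA, fun i hi j hj hij => ?_,
    fun x => ⟨σ x, mem_image_of_mem σ (mem_univ x), hσ x⟩⟩
  rw [← hfiber_eq i hi, ← hfiber_eq j hj, disjoint_filter]
  rintro x - rfl
  exact hij

end ExactCover

theorem exact_cover_iff_schedule_B3_general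
    {X : Type*} [Fintype X] (q m : ℕ)
    (hX : Fintype.card X = 3 * q)
    (S : Fin m → Finset X) (hS : ∀ i, (S i).card = 3) :
    (∃ A : Finset (Fin m), A.card = q ∧
        (∀ i ∈ A, ∀ j ∈ A, i ≠ j → Disjoint (S i) (S j)) ∧
        ∀ x : X, ∃ i ∈ A, x ∈ S i) ↔
    (∃ σ : X → Fin m, (∀ x : X, x ∈ S (σ x)) ∧
        (∀ i : Fin m, (Finset.univ.filter (fun x => σ x = i)).card ≤ 3) ∧
        (Finset.univ.image σ).card ≤ q) := by
  constructor
  · rintro ⟨A, rfl, -, hcov⟩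
    exact exists_schedule_of_cover (fun i => (hS i).le) hcov
  · rintro ⟨σ, hσ, hfib, him⟩
    exact exists_exactCover_of_schedule (by norm_num) hX hS hσ hfib him

/-- Reduction from 3-Exact-Cover: with `|X| = 3q`, sets `S i` of size 3, `B = 3`,
jobs being the elements of `X`, slots being the indices, and element `x` feasible
in slot `i` iff `x ∈ S i`: an exact cover of size `q` exists iff there is a
schedule of all jobs with active time at most `q`. -/
theorem exact_cover_iff_schedule_B3
    {X : Type*} [Fintype X] [DecidableEq X] (q m : ℕ)
    (hX : Fintype.card X = 3 * q)
    (S : Fin m → Finset X) (hS : ∀ i, (S i).card = 3) :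
    (∃ A : Finset (Fin m), A.card = q ∧
        (∀ i ∈ A, ∀ j ∈ A, i ≠ j → Disjoint (S i) (S j)) ∧
        ∀ x : X, ∃ i ∈ A, x ∈ S i) ↔
    (∃ σ : X → Fin m, (∀ x : X, x ∈ S (σ x)) ∧
        (∀ i : Fin m, (Finset.univ.filter (fun x => σ x = i)).card ≤ 3) ∧
        (Finset.univ.image σ).card ≤ q) :=
  exact_cover_iff_schedule_B3_general q m hX S hS
end

section
/- Let X be a finite set with |X| = 3q, and let S_1, …, S_m be subsets of X each of cardinality exactly 3. Consider the instance with B = 1 whose jobs are the indices {1, …, m}, each job i having length ℓ_i = 3 and feasible slot set T_i = S_i, and whose time slots are the elements of X. Then there exists a subset A ⊆ {1, …, m} of cardinality q such that every job in A can be completely scheduled (i.e., each i ∈ A is assigned a set A_i ⊆ S_i with |A_i| = 3 and every slot lies in at most one A_i) if and only if there exists an exact cover of X, i.e., q of the sets S_i that are pairwise disjoint and cover X. -/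
open Finset

/-!
A schedule with `B = 1` of length-3 jobs into 3-element slot sets must use the whole of each
`S i`, and the bound `B = 1` says exactly that the chosen sets are pairwise disjoint. So a
schedule of `q` jobs is the same as `q` pairwise disjoint sets `S i`, and these cover `X` by
counting: together they have `3q = |X|` elements.
-/

theorem Finset.card_filter_mem_le_one_iff_pairwiseDisjoint {ι α : Type*} [DecidableEq α]
    (A : Finset ι) (f : ι → Finset α) :
    (∀ x, (A.filter (fun i => x ∈ f i)).card ≤ 1) ↔ (A : Set ι).PairwiseDisjoint f := by
  simp only [card_le_one, mem_filter]
  constructor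
  · intro h i hi j hj hij
    exact disjoint_left.2 fun x hxi hxj => hij (h x i ⟨hi, hxi⟩ j ⟨hj, hxj⟩)
  · intro h x i ⟨hi, hxi⟩ j ⟨hj, hxj⟩
    by_contra hij
    exact disjoint_left.1 (h hi hj hij) hxi hxj

theorem Finset.biUnion_eq_univ_of_pairwiseDisjoint {ι α : Type*} [Fintype α] [DecidableEq α]
    {A : Finset ι} {S : ι → Finset α} {k : ℕ} (hd : (A : Set ι).PairwiseDisjoint S)
    (hS : ∀ i ∈ A, (S i).card = k) (hcard : A.card * k = Fintype.card α) :
    A.biUnion S = univ := by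
  refine eq_univ_of_card _ ?_
  rw [card_biUnion hd, sum_congr rfl hS, sum_const, smul_eq_mul, hcard]

/-- Reduction from 3-Exact-Cover for length-3 jobs on one processor (`B = 1`):
with `|X| = 3q` and jobs `i ∈ Fin m` of length 3 feasible exactly in the slots
`S i` (where `|S i| = 3`), one can completely schedule some `q` jobs iff there is
an exact cover of `X` by `q` of the sets `S i`. -/
theorem exact_cover_iff_q_length3_jobs_schedulable
    {X : Type*} [Fintype X] [DecidableEq X] (q m : ℕ)
    (hX : Fintype.card X = 3 * q)
    (S : Fin m → Finset X) (hS : ∀ i, (S i).card = 3) :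
    (∃ (A : Finset (Fin m)) (f : Fin m → Finset X), A.card = q ∧
        (∀ i ∈ A, f i ⊆ S i ∧ (f i).card = 3) ∧
        ∀ x : X, (A.filter (fun i => x ∈ f i)).card ≤ 1) ↔
    (∃ A : Finset (Fin m), A.card = q ∧
        (∀ i ∈ A, ∀ j ∈ A, i ≠ j → Disjoint (S i) (S j)) ∧
        ∀ x : X, ∃ i ∈ A, x ∈ S i) := by
  constructor
  · rintro ⟨A, f, hcard, hf, hone⟩
    have hfS : ∀ i ∈ A, f i = S i := fun i hi =>
      eq_of_subset_of_card_le (hf i hi).1 (by rw [(hf i hi).2, hS i])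
    have hfd := (card_filter_mem_le_one_iff_pairwiseDisjoint A f).1 hone
    have hd : (A : Set (Fin m)).PairwiseDisjoint S := fun i hi j hj hij => by
      simpa only [Function.onFun, hfS i hi, hfS j hj] using hfd hi hj hij
    have hcover := biUnion_eq_univ_of_pairwiseDisjoint hd (fun i _ => hS i)
      (by rw [hcard, hX, mul_comm])
    exact ⟨A, hcard, fun i hi j hj => hd hi hj,
      fun x => mem_biUnion.1 (hcover ▸ mem_univ x)⟩
  · rintro ⟨A, hcard, hd, -⟩
    exact ⟨A, S, hcard, fun i _ => ⟨subset_rfl, hS i⟩,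
      (card_filter_mem_le_one_iff_pairwiseDisjoint A S).2 fun i hi j hj => hd i hi j hj⟩
end
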